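/- arXiv:2107.04103 — 6 statements merged into one kernel-verified Lean document; each statement's English description precedes it below -/
import Mathlib

section
/- Let k ≥ 1, let X_1, …, X_k be independent random variables with X_i ~ Bernoulli(p_i), and let a_1, …, a_k ≥ 0 be real weights with max_i a_i > 0. If x > 0 satisfies ∑_{i=1}^k a_i p_i ≤ x, then P(∑_{i=1}^k a_i X_i > 3x) ≤ exp(−x / max_i a_i). -/
/-!
Chernoff's bound with `t = 1 / max_i a_i`, so that every `c = t a_i` lies in `[0, 1]`.
A `{0,1}`-valued variable with `P(X = 1) = p` has `E[e^{cX}] = 1 + (e^c - 1) p ≤ e^{2cp}`,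
since `e^c - 1 ≤ 2c` on `[0, 1]`. By independence `E[e^{tS}] ≤ e^{2t ∑ a_i p_i} ≤ e^{2tx}`
for `S = ∑ a_i X_i`, hence `P(S ≥ 3x) ≤ e^{-3tx} e^{2tx} = e^{-x / max_i a_i}`.
-/

open MeasureTheory ProbabilityTheory

lemma Real.exp_sub_one_le_two_mul {c : ℝ} (hc0 : 0 ≤ c) (hc1 : c ≤ 1) : Real.exp c - 1 ≤ 2 * c := by
  have h := Real.abs_exp_sub_one_le (x := c) (by rwa [abs_of_nonneg hc0])
  rw [abs_of_nonneg hc0] at h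
  exact (abs_le.mp h).2

section ZeroOne

variable {Ω : Type*} [MeasurableSpace Ω] {μ : Measure Ω} {X : Ω → ℝ}

lemma ae_eq_indicator_of_ae_zero_or_one (hval : ∀ᵐ ω ∂μ, X ω = 0 ∨ X ω = 1) :
    X =ᵐ[μ] {ω | X ω = 1}.indicator 1 := by
  filter_upwards [hval] with ω hω
  rcases hω with h | h <;> simp [Set.indicator, h]

lemma exp_mul_ae_eq_of_ae_zero_or_one (hval : ∀ᵐ ω ∂μ, X ω = 0 ∨ X ω = 1) (t : ℝ) :
    (fun ω ↦ Real.exp (t * X ω)) =ᵐ[μ] fun ω ↦ 1 + (Real.exp t - 1) * X ω := by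
  filter_upwards [hval] with ω hω
  rcases hω with h | h <;> simp [h]

lemma integral_eq_measureReal_of_ae_zero_or_one (hX : Measurable X)
    (hval : ∀ᵐ ω ∂μ, X ω = 0 ∨ X ω = 1) : ∫ ω, X ω ∂μ = μ.real {ω | X ω = 1} :=
  (integral_congr_ae (ae_eq_indicator_of_ae_zero_or_one hval)).trans
    (integral_indicator_one (hX (measurableSet_singleton 1)))

variable [IsFiniteMeasure μ]

lemma integrable_of_ae_zero_or_one (hX : Measurable X) (hval : ∀ᵐ ω ∂μ, X ω = 0 ∨ X ω = 1) :
    Integrable X μ :=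
  (integrable_congr (ae_eq_indicator_of_ae_zero_or_one hval)).mpr
    ((integrable_const (1 : ℝ)).indicator (hX (measurableSet_singleton 1)))

lemma integrable_exp_mul_of_ae_zero_or_one (hX : Measurable X)
    (hval : ∀ᵐ ω ∂μ, X ω = 0 ∨ X ω = 1) (t : ℝ) :
    Integrable (fun ω ↦ Real.exp (t * X ω)) μ :=
  (integrable_congr (exp_mul_ae_eq_of_ae_zero_or_one hval t)).mpr
    ((integrable_const 1).add ((integrable_of_ae_zero_or_one hX hval).const_mul _))

lemma mgf_eq_of_ae_zero_or_one [IsProbabilityMeasure μ] (hX : Measurable X)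
    (hval : ∀ᵐ ω ∂μ, X ω = 0 ∨ X ω = 1) (t : ℝ) :
    mgf X μ t = 1 + (Real.exp t - 1) * μ.real {ω | X ω = 1} := by
  rw [mgf, integral_congr_ae (exp_mul_ae_eq_of_ae_zero_or_one hval t),
    integral_add (integrable_const 1) ((integrable_of_ae_zero_or_one hX hval).const_mul _),
    integral_const, integral_const_mul, integral_eq_measureReal_of_ae_zero_or_one hX hval]
  simp

lemma mgf_le_exp_two_mul_of_ae_zero_or_one [IsProbabilityMeasure μ] (hX : Measurable X)
    (hval : ∀ᵐ ω ∂μ, X ω = 0 ∨ X ω = 1) {c : ℝ} (hc0 : 0 ≤ c) (hc1 : c ≤ 1) :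
    mgf X μ c ≤ Real.exp (2 * c * μ.real {ω | X ω = 1}) := by
  rw [mgf_eq_of_ae_zero_or_one hX hval]
  calc 1 + (Real.exp c - 1) * μ.real {ω | X ω = 1}
      ≤ Real.exp ((Real.exp c - 1) * μ.real {ω | X ω = 1}) := by
        linarith [Real.add_one_le_exp ((Real.exp c - 1) * μ.real {ω | X ω = 1})]
    _ ≤ Real.exp (2 * c * μ.real {ω | X ω = 1}) := by
        gcongr
        exact Real.exp_sub_one_le_two_mul hc0 hc1

end ZeroOne

theorem measureReal_sum_mul_ge_le_exp {Ω ι : Type*} [MeasurableSpace Ω] {μ : Measure Ω}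
    [IsProbabilityMeasure μ] [Fintype ι] {X : ι → Ω → ℝ} (hmeas : ∀ i, Measurable (X i))
    (hindep : iIndepFun X μ) (hval : ∀ i, ∀ᵐ ω ∂μ, X i ω = 0 ∨ X i ω = 1)
    {a : ι → ℝ} (ha : ∀ i, 0 ≤ a i) {t : ℝ} (ht : 0 ≤ t) (hta : ∀ i, t * a i ≤ 1) (y : ℝ) :
    μ.real {ω | y ≤ ∑ i, a i * X i ω}
      ≤ Real.exp (-t * y + 2 * t * ∑ i, a i * μ.real {ω | X i ω = 1}) := by
  set Y : ι → Ω → ℝ := fun i ω ↦ a i * X i ω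
  have hY_meas : ∀ i, Measurable (Y i) := fun i ↦ (hmeas i).const_mul _
  have hY_indep : iIndepFun Y μ := hindep.comp (fun i y ↦ a i * y) fun i ↦ measurable_const_mul _
  have hY_mgf : ∀ i, mgf (Y i) μ t = mgf (X i) μ (t * a i) := fun i ↦ by
    rw [mgf_const_mul, mul_comm]
  have hY_int : ∀ i, Integrable (fun ω ↦ Real.exp (t * Y i ω)) μ := fun i ↦ by
    simpa only [Y, mul_assoc] using
      integrable_exp_mul_of_ae_zero_or_one (hmeas i) (hval i) (t * a i)
  have h_mgf : mgf (∑ i, Y i) μ t ≤ Real.exp (2 * t * ∑ i, a i * μ.real {ω | X i ω = 1}) := by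
    calc mgf (∑ i, Y i) μ t = ∏ i, mgf (X i) μ (t * a i) := by
          simp only [hY_indep.mgf_sum hY_meas, hY_mgf]
      _ ≤ ∏ i, Real.exp (2 * (t * a i) * μ.real {ω | X i ω = 1}) :=
          Finset.prod_le_prod (fun i _ ↦ mgf_nonneg) fun i _ ↦
            mgf_le_exp_two_mul_of_ae_zero_or_one (hmeas i) (hval i) (mul_nonneg ht (ha i)) (hta i)
      _ = Real.exp (2 * t * ∑ i, a i * μ.real {ω | X i ω = 1}) := by
          rw [← Real.exp_sum, Finset.mul_sum]
          simp only [mul_assoc]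
  have h_chernoff := measure_ge_le_exp_mul_mgf y ht
    (hY_indep.integrable_exp_mul_sum hY_meas (s := Finset.univ) fun i _ ↦ hY_int i)
  simp only [Finset.sum_apply, Y] at h_chernoff h_mgf
  rw [Real.exp_add]
  exact h_chernoff.trans (by gcongr)

theorem stmt0_general {Ω : Type*} [MeasurableSpace Ω] (μ : Measure Ω) [IsProbabilityMeasure μ]
    (k : ℕ) (hk : 1 ≤ k) (X : Fin k → Ω → ℝ) (p a : Fin k → ℝ)
    (hmeas : ∀ i, Measurable (X i))
    (hindep : iIndepFun X μ)
    (hp01 : ∀ i, p i ∈ Set.Icc (0 : ℝ) 1)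
    (hval : ∀ i, ∀ᵐ ω ∂μ, X i ω = 0 ∨ X i ω = 1)
    (hX1 : ∀ i, μ {ω | X i ω = 1} = ENNReal.ofReal (p i))
    (ha : ∀ i, 0 ≤ a i) (hapos : ∃ i, 0 < a i)
    (x : ℝ) (hsum : ∑ i, a i * p i ≤ x) :
    μ {ω | 3 * x < ∑ i, a i * X i ω}
      ≤ ENNReal.ofReal
          (Real.exp (-(x / Finset.univ.sup' (Finset.univ_nonempty_iff.mpr ⟨⟨0, hk⟩⟩) a))) := by
  set M := Finset.univ.sup' (Finset.univ_nonempty_iff.mpr ⟨⟨0, hk⟩⟩) a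
  have ha_le : ∀ i, a i ≤ M := fun i ↦ Finset.le_sup' a (Finset.mem_univ i)
  have hM : 0 < M := by
    obtain ⟨j, hj⟩ := hapos
    exact hj.trans_le (ha_le j)
  have hp : ∀ i, μ.real {ω | X i ω = 1} = p i := fun i ↦ by
    rw [measureReal_def, hX1, ENNReal.toReal_ofReal (hp01 i).1]
  have h_tail := measureReal_sum_mul_ge_le_exp hmeas hindep hval ha (inv_nonneg.mpr hM.le)
    (fun i ↦ inv_mul_le_one_of_le₀ (ha_le i) hM.le) (3 * x)
  simp only [hp] at h_tail
  calc μ {ω | 3 * x < ∑ i, a i * X i ω}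
      ≤ μ {ω | 3 * x ≤ ∑ i, a i * X i ω} :=
        measure_mono (Set.ofPred_subset_ofPred.mpr fun _ ↦ le_of_lt)
    _ = ENNReal.ofReal (μ.real {ω | 3 * x ≤ ∑ i, a i * X i ω}) := by
        rw [measureReal_def, ENNReal.ofReal_toReal (measure_ne_top _ _)]
    _ ≤ ENNReal.ofReal (Real.exp (-(x / M))) := by
        refine ENNReal.ofReal_le_ofReal (h_tail.trans (Real.exp_le_exp.mpr ?_))
        rw [div_eq_inv_mul]
        nlinarith [inv_pos.mpr hM]

/-- If `X_1, …, X_k` are independent Bernoulli(`p_i`) random variables,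
`a_i ≥ 0` are weights with some `a_i > 0`, and `∑ a_i p_i ≤ x` with `x > 0`, then
`P(∑ a_i X_i > 3x) ≤ exp(−x / max_i a_i)`. -/
theorem stmt0 {Ω : Type*} [MeasurableSpace Ω] (μ : Measure Ω) [IsProbabilityMeasure μ]
    (k : ℕ) (hk : 1 ≤ k) (X : Fin k → Ω → ℝ) (p a : Fin k → ℝ)
    (hmeas : ∀ i, Measurable (X i))
    (hindep : iIndepFun X μ)
    (hp01 : ∀ i, p i ∈ Set.Icc (0 : ℝ) 1)
    (hval : ∀ i, ∀ᵐ ω ∂μ, X i ω = 0 ∨ X i ω = 1)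
    (hX1 : ∀ i, μ {ω | X i ω = 1} = ENNReal.ofReal (p i))
    (ha : ∀ i, 0 ≤ a i) (hapos : ∃ i, 0 < a i)
    (x : ℝ) (hx : 0 < x) (hsum : ∑ i, a i * p i ≤ x) :
    μ {ω | 3 * x < ∑ i, a i * X i ω}
      ≤ ENNReal.ofReal
          (Real.exp (-(x / Finset.univ.sup' (Finset.univ_nonempty_iff.mpr ⟨⟨0, hk⟩⟩) a))) :=
  stmt0_general μ k hk X p a hmeas hindep hp01 hval hX1 ha hapos x hsum
end

section
/- For every λ > 0 and all positive integers i, j, one has p_∞(i,j) ≤ λ_{ij} ≤ λ² h(i,j), where p_∞(i,j) = 1 − e^{−λ_{ij}}; in particular the two-step connection probability p_∞(i,j) is dominated by λ² B_α (min(i,j))^{−(1−α)} (max(i,j))^{−α}. -/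
open MeasureTheory Real Filter
open scoped ENNReal NNReal

noncomputable section

/-- `α = 1/(τ−1)`. -/
def alphaOf (τ : ℝ) : ℝ := 1 / (τ - 1)

/-- `μ = c_F/(1−α)`. -/
def muOf (τ cF : ℝ) : ℝ := cF / (1 - alphaOf τ)

/-- `A_α = ∫_0^∞ (1 − e^{−z}) z^{−1/α} dz`. -/
def AalphaOf (τ : ℝ) : ℝ :=
  ∫ z in Set.Ioi (0 : ℝ), (1 - Real.exp (-z)) * z ^ (-(1 / alphaOf τ))

/-- `B_α = c_F^{2/α} A_α/(α μ^{1/α})`. -/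
def BalphaOf (τ cF : ℝ) : ℝ :=
  cF ^ (2 / alphaOf τ) * AalphaOf τ / (alphaOf τ * muOf τ cF ^ (1 / alphaOf τ))

/-- `λ_c = √(η/(4B_α))` with `η = 2α−1`. -/
def lambdaC (τ cF : ℝ) : ℝ :=
  Real.sqrt ((2 * alphaOf τ - 1) / (4 * BalphaOf τ cF))

/-- `h(x,y) = B_α (min x y)^{−(1−α)} (max x y)^{−α}`. -/
def hOf (τ cF : ℝ) (x y : ℝ) : ℝ :=
  BalphaOf τ cF * (min x y) ^ (-(1 - alphaOf τ)) * (max x y) ^ (-alphaOf τ)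

/-- `θ_i = c_F i^{−α}/μ`. -/
def thetaOf (τ cF : ℝ) (i : ℕ) : ℝ := cF * (i : ℝ) ^ (-alphaOf τ) / muOf τ cF

/-- `Θ_i(x) = 1 − exp(−c_F θ_i x^{−α})`. -/
def ThetaOf (τ cF : ℝ) (i : ℕ) (x : ℝ) : ℝ :=
  1 - Real.exp (-(cF * thetaOf τ cF i * x ^ (-alphaOf τ)))

/-- `λ_{ij} = λ² ∫_0^∞ Θ_i(x) Θ_j(x) dx`. -/
def lamIJ (τ cF lam : ℝ) (i j : ℕ) : ℝ :=
  lam ^ 2 * ∫ x in Set.Ioi (0 : ℝ), ThetaOf τ cF i x * ThetaOf τ cF j x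

open Set

/-! Since `1 - e^{-u} ≤ u`, one has `Θ_k(x) ≤ c k^{-α} x^{-α}` with `c = c_F² / μ`. The remaining
integral `∫ x^{-α} (1 - e^{-b x^{-α}}) dx` is computed exactly by the substitution `z = b x^{-α}`:
it equals `α⁻¹ b^{1/α - 1} A_α`, and it is finite because `1/2 < α < 1`. Putting
`b = c l^{-α}` gives `λ² B_α l^{-(1-α)} k^{-α}`, and the bound `1 - e^{-λ_{ij}} ≤ λ_{ij}`
is again `1 - e^{-u} ≤ u`. -/

theorem one_sub_exp_neg_nonneg {u : ℝ} (hu : 0 ≤ u) : 0 ≤ 1 - exp (-u) :=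
  sub_nonneg.2 (exp_le_one_iff.2 (neg_nonpos.2 hu))

theorem one_sub_exp_neg_le_one (u : ℝ) : 1 - exp (-u) ≤ 1 :=
  sub_le_self _ (exp_pos _).le

theorem one_sub_exp_neg_le_self (u : ℝ) : 1 - exp (-u) ≤ u := by
  linarith [one_sub_le_exp_neg u]

theorem integral_Ioi_rpow_neg_mul_comp_rpow_neg {α : ℝ} (hα : 0 < α) (f : ℝ → ℝ) :
    ∫ x in Ioi 0, x ^ (-α) * f (x ^ (-α)) = α⁻¹ * ∫ y in Ioi 0, f y * y ^ (-(1 / α)) := by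
  rw [← integral_const_mul,
    ← integral_comp_rpow_Ioi (fun y => α⁻¹ * (f y * y ^ (-(1 / α)))) (neg_ne_zero.2 hα.ne')]
  refine setIntegral_congr_fun measurableSet_Ioi fun x (hx : 0 < x) => ?_
  have hinv : (x ^ (-α)) ^ (-(1 / α)) = x := by
    rw [← rpow_mul hx.le, neg_mul_neg, mul_one_div_cancel hα.ne', rpow_one]
  have hpow : x ^ (-α - 1) * x = x ^ (-α) := by
    rw [← rpow_add_one hx.ne', sub_add_cancel]
  rw [smul_eq_mul, hinv, abs_neg, abs_of_pos hα, ← hpow]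
  field_simp

theorem integral_Ioi_comp_mul_left_mul_rpow {a : ℝ} (ha : 0 < a) (s : ℝ) (f : ℝ → ℝ) :
    ∫ y in Ioi 0, f (a * y) * y ^ s = a ^ (-s - 1) * ∫ z in Ioi 0, f z * z ^ s := by
  have h := integral_comp_mul_left_Ioi (fun z => f z * z ^ s) 0 ha
  simp only [mul_zero, smul_eq_mul] at h
  rw [rpow_sub ha, rpow_one, rpow_neg ha.le, div_eq_mul_inv, mul_assoc, ← h,
    ← integral_const_mul]
  refine setIntegral_congr_fun measurableSet_Ioi fun y (hy : 0 < y) => ?_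
  rw [mul_rpow ha.le hy.le]
  field_simp

theorem integral_rpow_neg_mul_one_sub_exp {α a : ℝ} (hα : 0 < α) (ha : 0 < a) :
    ∫ x in Ioi 0, x ^ (-α) * (1 - exp (-(a * x ^ (-α))))
      = α⁻¹ * (a ^ (1 / α - 1) * ∫ z in Ioi 0, (1 - exp (-z)) * z ^ (-(1 / α))) := by
  rw [integral_Ioi_rpow_neg_mul_comp_rpow_neg hα (fun y => 1 - exp (-(a * y))),
    integral_Ioi_comp_mul_left_mul_rpow ha _ (fun z => 1 - exp (-z)), neg_neg]

theorem integrableOn_rpow_neg_mul_one_sub_exp {α a : ℝ} (hα₁ : 1 / 2 < α) (hα₂ : α < 1)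
    (ha : 0 ≤ a) :
    IntegrableOn (fun x => x ^ (-α) * (1 - exp (-(a * x ^ (-α))))) (Ioi 0) := by
  have hmeas : AEStronglyMeasurable (fun x : ℝ => x ^ (-α) * (1 - exp (-(a * x ^ (-α))))) :=
    (by fun_prop : Measurable _).aestronglyMeasurable
  have hnorm : ∀ x : ℝ, 0 < x → ‖x ^ (-α) * (1 - exp (-(a * x ^ (-α))))‖
      = x ^ (-α) * (1 - exp (-(a * x ^ (-α)))) := fun x hx =>
    Real.norm_of_nonneg (mul_nonneg (by positivity) (one_sub_exp_neg_nonneg (by positivity)))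
  -- integrable like `x ^ (-α)` near `0` and like `a * x ^ (-2α)` near `∞`
  have hzero : IntegrableOn (fun x => x ^ (-α) * (1 - exp (-(a * x ^ (-α))))) (Ioc 0 1) := by
    refine Integrable.mono' (intervalIntegral.intervalIntegrable_rpow' (r := -α) (by linarith)).1
      hmeas.restrict ?_
    filter_upwards [ae_restrict_mem measurableSet_Ioc] with x ⟨hx0, _⟩
    rw [hnorm x hx0]
    exact mul_le_of_le_one_right (by positivity) (one_sub_exp_neg_le_one _)
  have hinfty : IntegrableOn (fun x => x ^ (-α) * (1 - exp (-(a * x ^ (-α))))) (Ioi 1) := by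
    refine Integrable.mono'
      ((integrableOn_Ioi_rpow_of_lt (by linarith : -(2 * α) < -1) one_pos).const_mul a)
      hmeas.restrict ?_
    filter_upwards [ae_restrict_mem measurableSet_Ioi] with x (hx : 1 < x)
    have hx0 : 0 < x := one_pos.trans hx
    rw [hnorm x hx0, show -(2 * α) = -α + -α by ring, rpow_add hx0]
    calc x ^ (-α) * (1 - exp (-(a * x ^ (-α)))) ≤ x ^ (-α) * (a * x ^ (-α)) := by
          gcongr; exact one_sub_exp_neg_le_self _
      _ = a * (x ^ (-α) * x ^ (-α)) := by ring
  simpa only [Ioc_union_Ioi_eq_Ioi zero_le_one] using hzero.union hinfty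

theorem integral_one_sub_exp_mul_one_sub_exp_le {α a b : ℝ} (hα₁ : 1 / 2 < α) (hα₂ : α < 1)
    (ha : 0 ≤ a) (hb : 0 < b) :
    ∫ x in Ioi 0, (1 - exp (-(a * x ^ (-α)))) * (1 - exp (-(b * x ^ (-α))))
      ≤ a * (α⁻¹ * (b ^ (1 / α - 1) * ∫ z in Ioi 0, (1 - exp (-z)) * z ^ (-(1 / α)))) := by
  rw [← integral_rpow_neg_mul_one_sub_exp (by linarith) hb, ← integral_const_mul]
  refine integral_mono_of_nonneg ?_
    ((integrableOn_rpow_neg_mul_one_sub_exp hα₁ hα₂ hb.le).const_mul a) ?_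
  · filter_upwards [ae_restrict_mem measurableSet_Ioi] with x (hx : 0 < x)
    exact mul_nonneg (one_sub_exp_neg_nonneg (by positivity))
      (one_sub_exp_neg_nonneg (by positivity))
  · filter_upwards [ae_restrict_mem measurableSet_Ioi] with x (hx : 0 < x)
    calc (1 - exp (-(a * x ^ (-α)))) * (1 - exp (-(b * x ^ (-α))))
        ≤ (a * x ^ (-α)) * (1 - exp (-(b * x ^ (-α)))) := by
          gcongr
          · exact one_sub_exp_neg_nonneg (by positivity)
          · exact one_sub_exp_neg_le_self _
      _ = a * (x ^ (-α) * (1 - exp (-(b * x ^ (-α))))) := by ring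

theorem alphaOf_mem_Ioo {τ : ℝ} (hτ : τ ∈ Ioo (2 : ℝ) 3) : alphaOf τ ∈ Ioo (1 / 2) 1 := by
  obtain ⟨h2, h3⟩ := hτ
  constructor
  · rw [alphaOf, div_lt_div_iff₀ two_pos (by linarith)]; linarith
  · rw [alphaOf, div_lt_one (by linarith)]; linarith

theorem ThetaOf_eq (τ cF : ℝ) (i : ℕ) (x : ℝ) :
    ThetaOf τ cF i x
      = 1 - exp (-(cF ^ 2 / muOf τ cF * (i : ℝ) ^ (-alphaOf τ) * x ^ (-alphaOf τ))) := by
  rw [ThetaOf, thetaOf]; ring_nf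

theorem hOf_comm (τ cF x y : ℝ) : hOf τ cF x y = hOf τ cF y x := by
  rw [hOf, hOf, min_comm, max_comm]

theorem integral_ThetaOf_mul_le {τ cF : ℝ} (hτ : τ ∈ Ioo (2 : ℝ) 3) (hcF : 0 < cF) {k l : ℕ}
    (hl : 0 < l) :
    ∫ x in Ioi 0, ThetaOf τ cF k x * ThetaOf τ cF l x
      ≤ BalphaOf τ cF * (l : ℝ) ^ (-(1 - alphaOf τ)) * (k : ℝ) ^ (-alphaOf τ) := by
  obtain ⟨hα₁, hα₂⟩ := alphaOf_mem_Ioo hτ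
  have hμ : 0 < muOf τ cF := div_pos hcF (by linarith)
  have hl₀ : (0 : ℝ) < l := Nat.cast_pos.2 hl
  simp only [ThetaOf_eq]
  rw [BalphaOf, AalphaOf]
  set α := alphaOf τ
  set μ := muOf τ cF
  set c := cF ^ 2 / μ
  have hc : 0 < c := by positivity
  have hcl : (c * (l : ℝ) ^ (-α)) ^ (1 / α - 1) = c ^ (1 / α - 1) * (l : ℝ) ^ (-(1 - α)) := by
    rw [mul_rpow hc.le (by positivity), ← rpow_mul hl₀.le]
    congr 2
    field_simp
  have hc_mul : c * c ^ (1 / α - 1) * μ ^ (1 / α) = cF ^ (2 / α) := by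
    rw [rpow_sub hc, rpow_one, mul_div_cancel₀ _ hc.ne', div_rpow (by positivity) hμ.le,
      div_mul_cancel₀ _ (by positivity), ← rpow_natCast, ← rpow_mul hcF.le]
    norm_num [div_eq_mul_inv]
  refine (integral_one_sub_exp_mul_one_sub_exp_le hα₁ hα₂ (by positivity)
    (by positivity)).trans_eq ?_
  rw [hcl, ← hc_mul]
  field_simp

theorem integral_ThetaOf_mul_le_hOf {τ cF : ℝ} (hτ : τ ∈ Ioo (2 : ℝ) 3) (hcF : 0 < cF)
    {k l : ℕ} (hl : 1 ≤ l) (hlk : l ≤ k) :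
    ∫ x in Ioi 0, ThetaOf τ cF k x * ThetaOf τ cF l x ≤ hOf τ cF k l := by
  have hlk' : (l : ℝ) ≤ k := Nat.cast_le.2 hlk
  rw [hOf, min_eq_right hlk', max_eq_left hlk']
  exact integral_ThetaOf_mul_le hτ hcF hl

theorem stmt4_general (τ cF lam : ℝ) (hτ : τ ∈ Set.Ioo (2 : ℝ) 3) (hcF : 0 < cF)
    (i j : ℕ) (hi : 1 ≤ i) (hj : 1 ≤ j) :
    1 - Real.exp (-(lamIJ τ cF lam i j)) ≤ lamIJ τ cF lam i j
    ∧ lamIJ τ cF lam i j ≤ lam ^ 2 * hOf τ cF (i : ℝ) (j : ℝ) := by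
  refine ⟨one_sub_exp_neg_le_self _, ?_⟩
  rw [lamIJ]
  gcongr
  rcases le_total j i with hji | hij
  · exact integral_ThetaOf_mul_le_hOf hτ hcF hj hji
  · simp_rw [mul_comm (ThetaOf τ cF i _), hOf_comm τ cF i]
    exact integral_ThetaOf_mul_le_hOf hτ hcF hi hij

/-- For every `λ > 0` and positive integers `i, j`:
`p_∞(i,j) = 1 − e^{−λ_{ij}} ≤ λ_{ij} ≤ λ² h(i,j)`. -/
theorem stmt4 (τ cF lam : ℝ) (hτ : τ ∈ Set.Ioo (2 : ℝ) 3) (hcF : 0 < cF) (hlam : 0 < lam)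
    (i j : ℕ) (hi : 1 ≤ i) (hj : 1 ≤ j) :
    1 - Real.exp (-(lamIJ τ cF lam i j)) ≤ lamIJ τ cF lam i j
    ∧ lamIJ τ cF lam i j ≤ lam ^ 2 * hOf τ cF (i : ℝ) (j : ℝ) :=
  stmt4_general τ cF lam hτ hcF i j hi hj
end
end

section
/- Let α ∈ (1/2, 1) and b ∈ (1/2, α), and set K_b = 1/(α+b−1) + 1/(α−b). Define g_1(i,j) = (min(i,j))^{−(1−α)} (max(i,j))^{−α} for positive integers i, j, and recursively g_{k+1}(i,j) = ∑_{v=1}^∞ g_1(i,v) g_k(v,j). Then for every k ≥ 1 and all positive integers i, j, the defining series converge and g_k(i,j) ≤ K_b^k (min(i,j))^{−(1−b)} (max(i,j))^{−b}. -/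
/-!
Write `h_b(x, y) = min(x, y)^(b-1) max(x, y)^(-b)`, so that `g_1 = h_α`. For `b ≥ 1/2` one has
both `h_b(v, j) ≤ v^(b-1) j^(-b)` and `h_b(v, j) ≤ j^(b-1) v^(-b)`, and at `v = i` the first is
an equality when `i ≤ j`, the second when `j ≤ i`. It therefore suffices to bound
`∑_v h_α(i, v) v^s` for `s = b - 1` and `s = -b`: split at `v = i`, the two pieces are power sums
`i^(-α) ∑_{v ≤ i} v^(α+s-1) ≤ i^s/(α+s)` and `i^(α-1) ∑_{v > i} v^(s-α) ≤ i^s/(α-1-s)`, and in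
both cases `1/(α+s) + 1/(α-1-s) = K_b`. This gives `∑_v g_1(i, v) h_b(v, j) ≤ K_b h_b(i, j)`, and
the theorem follows by induction on `k`, starting from `h_α ≤ h_b ≤ K_b h_b`.
-/

open scoped ENNReal

noncomputable section

/-- The one-step kernel `g_1(i,j) = (min i j)^{−(1−α)} (max i j)^{−α}` on the
positive integers, valued in `[0,∞]`. -/
def gOne (α : ℝ) (i j : ℕ+) : ℝ≥0∞ :=
  ENNReal.ofReal
    ((min ((i : ℕ) : ℝ) ((j : ℕ) : ℝ)) ^ (-(1 - α)) * (max ((i : ℕ) : ℝ) ((j : ℕ) : ℝ)) ^ (-α))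

/-- The iterated kernels: `gIter α 0` is the identity kernel and
`gIter α (k+1) i j = ∑_{v=1}^∞ g_1(i,v) · gIter α k v j`, so that `gIter α k = g_k`
(the `k`-fold iterate of `g_1`) for `k ≥ 1`. -/
def gIter (α : ℝ) : ℕ → ℕ+ → ℕ+ → ℝ≥0∞
  | 0, i, j => if i = j then 1 else 0
  | n + 1, i, j => ∑' v : ℕ+, gOne α i v * gIter α n v j

open Real Finset

namespace Real

theorem add_one_rpow_sub_one_le_div {p a : ℝ} (hp : p ≤ 1) (hp₀ : p ≠ 0) (ha : 0 ≤ a)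
    (hpa : 0 < a ∨ 0 < p) : (a + 1) ^ (p - 1) ≤ ((a + 1) ^ p - a ^ p) / p := by
  have hcont : ContinuousOn (fun x : ℝ => x ^ p) (Set.Icc a (a + 1)) := by
    refine continuousOn_id.rpow_const fun x hx => ?_
    rcases hpa with ha' | hp'
    · exact Or.inl (show 0 < x by linarith [hx.1]).ne'
    · exact Or.inr hp'.le
  have hderiv : ∀ x ∈ Set.Ioo a (a + 1),
      HasDerivAt (fun x : ℝ => x ^ p) (p * x ^ (p - 1)) x :=
    fun x hx => hasDerivAt_rpow_const (Or.inl (by linarith [hx.1]))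
  obtain ⟨c, hc, hslope⟩ := exists_hasDerivAt_eq_slope _ _ (lt_add_one a) hcont hderiv
  rw [add_sub_cancel_left, div_one] at hslope
  rw [← hslope, mul_div_cancel_left₀ _ hp₀]
  exact rpow_le_rpow_of_nonpos (by linarith [hc.1]) hc.2.le (by linarith)

theorem sum_Ioc_rpow_sub_one_le {p : ℝ} (hp : p ≤ 1) (hp₀ : p ≠ 0) {n : ℕ}
    (hn : 0 < n ∨ 0 < p) {m : ℕ} (hnm : n ≤ m) :
    ∑ v ∈ Ioc n m, (v : ℝ) ^ (p - 1) ≤ ((m : ℝ) ^ p - (n : ℝ) ^ p) / p := by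
  induction m, hnm using Nat.le_induction with
  | base => simp
  | succ m hnm ih =>
    have hm : 0 < (m : ℝ) ∨ 0 < p := hn.imp_left fun h => by exact_mod_cast h.trans_le hnm
    have hstep := add_one_rpow_sub_one_le_div hp hp₀ m.cast_nonneg hm
    rw [sum_Ioc_succ_top hnm]
    push_cast
    calc _ ≤ ((m : ℝ) ^ p - (n : ℝ) ^ p) / p + ((m + 1 : ℝ) ^ p - (m : ℝ) ^ p) / p :=
          add_le_add ih hstep
      _ = _ := by ring

theorem sum_Ioc_zero_rpow_sub_one_le {p : ℝ} (hp₀ : 0 < p) (hp : p ≤ 1) (m : ℕ) :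
    ∑ v ∈ Ioc 0 m, (v : ℝ) ^ (p - 1) ≤ (m : ℝ) ^ p / p := by
  simpa [zero_rpow hp₀.ne'] using sum_Ioc_rpow_sub_one_le hp hp₀.ne' (Or.inr hp₀) m.zero_le

theorem sum_Ioc_rpow_sub_one_le_of_neg {p : ℝ} (hp : p < 0) {n : ℕ} (hn : 0 < n) (m : ℕ) :
    ∑ v ∈ Ioc n m, (v : ℝ) ^ (p - 1) ≤ (n : ℝ) ^ p / -p := by
  rcases le_or_gt n m with hnm | hmn
  · calc _ ≤ ((m : ℝ) ^ p - (n : ℝ) ^ p) / p :=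
          sum_Ioc_rpow_sub_one_le (by linarith) hp.ne (Or.inl hn) hnm
      _ ≤ -(n : ℝ) ^ p / p :=
          div_le_div_of_nonpos_of_le hp.le (by linarith [rpow_nonneg m.cast_nonneg p])
      _ = _ := by rw [neg_div, div_neg]
  · rw [Ioc_eq_empty_of_le hmn.le, sum_empty]
    exact div_nonneg (rpow_nonneg n.cast_nonneg p) (by linarith)

end Real

def powKernel (a x y : ℝ) : ℝ :=
  min x y ^ (a - 1) * max x y ^ (-a)

theorem powKernel_comm (a x y : ℝ) : powKernel a x y = powKernel a y x := by
  rw [powKernel, powKernel, min_comm, max_comm]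

theorem powKernel_of_le {a x y : ℝ} (h : x ≤ y) : powKernel a x y = x ^ (a - 1) * y ^ (-a) := by
  rw [powKernel, min_eq_left h, max_eq_right h]

theorem powKernel_nonneg (a : ℝ) {x y : ℝ} (hx : 0 ≤ x) (hy : 0 ≤ y) : 0 ≤ powKernel a x y :=
  mul_nonneg (rpow_nonneg (le_min hx hy) _) (rpow_nonneg (le_max_of_le_left hx) _)

theorem powKernel_le_rpow_mul_rpow {b x y : ℝ} (hb : 1 / 2 ≤ b) (hx : 0 < x) (hy : 0 < y) :
    powKernel b x y ≤ x ^ (b - 1) * y ^ (-b) := by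
  rcases le_total x y with hxy | hyx
  · rw [powKernel_of_le hxy]
  · rw [powKernel_comm, powKernel_of_le hyx]
    have key : y ^ (2 * b - 1) ≤ x ^ (2 * b - 1) := rpow_le_rpow hy.le hyx (by linarith)
    calc y ^ (b - 1) * x ^ (-b) = y ^ (2 * b - 1) * (x ^ (-b) * y ^ (-b)) := by
          rw [show b - 1 = 2 * b - 1 + -b by ring, rpow_add hy]; ring
      _ ≤ x ^ (2 * b - 1) * (x ^ (-b) * y ^ (-b)) := by gcongr
      _ = x ^ (b - 1) * y ^ (-b) := by
          rw [show b - 1 = 2 * b - 1 + -b by ring, rpow_add hx]; ring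

theorem powKernel_le_of_le {a b x y : ℝ} (hba : b ≤ a) (hx : 0 < x) (hy : 0 < y) :
    powKernel a x y ≤ powKernel b x y := by
  have hmin : 0 < min x y := lt_min hx hy
  have hmax : 0 < max x y := lt_max_of_lt_left hx
  calc powKernel a x y = min x y ^ (a - b) * (min x y ^ (b - 1) * max x y ^ (-a)) := by
        rw [powKernel, show a - 1 = a - b + (b - 1) by ring, rpow_add hmin]; ring
    _ ≤ max x y ^ (a - b) * (min x y ^ (b - 1) * max x y ^ (-a)) := by
        gcongr ?_ * _
        exact rpow_le_rpow hmin.le min_le_max (by linarith)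
    _ = powKernel b x y := by
        rw [powKernel, show -b = a - b + -a by ring, rpow_add hmax]; ring

theorem sum_Ioc_zero_self_powKernel_mul_rpow_le {α s : ℝ} (hp₀ : 0 < α + s) (hp : α + s ≤ 1)
    {i : ℕ} (hi : 0 < i) :
    ∑ v ∈ Ioc 0 i, powKernel α i v * (v : ℝ) ^ s ≤ (i : ℝ) ^ s / (α + s) := by
  have hI : (0 : ℝ) < i := Nat.cast_pos.2 hi
  calc _ = (i : ℝ) ^ (-α) * ∑ v ∈ Ioc 0 i, (v : ℝ) ^ (α + s - 1) := by
        rw [mul_sum]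
        refine sum_congr rfl fun v hv => ?_
        have hv0 : (0 : ℝ) < v := Nat.cast_pos.2 (mem_Ioc.1 hv).1
        rw [powKernel_comm, powKernel_of_le (by exact_mod_cast (mem_Ioc.1 hv).2),
          show α + s - 1 = α - 1 + s by ring, rpow_add hv0]
        ring
    _ ≤ (i : ℝ) ^ (-α) * ((i : ℝ) ^ (α + s) / (α + s)) := by
        gcongr; exact sum_Ioc_zero_rpow_sub_one_le hp₀ hp i
    _ = (i : ℝ) ^ s / (α + s) := by rw [mul_div_assoc', ← rpow_add hI]; ring_nf

theorem sum_Ioc_self_powKernel_mul_rpow_le {α s : ℝ} (hq : s + 1 < α) {i : ℕ} (hi : 0 < i)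
    (M : ℕ) : ∑ v ∈ Ioc i M, powKernel α i v * (v : ℝ) ^ s ≤ (i : ℝ) ^ s / (α - 1 - s) := by
  have hI : (0 : ℝ) < i := Nat.cast_pos.2 hi
  calc _ = (i : ℝ) ^ (α - 1) * ∑ v ∈ Ioc i M, (v : ℝ) ^ (s + 1 - α - 1) := by
        rw [mul_sum]
        refine sum_congr rfl fun v hv => ?_
        have hiv : (i : ℝ) ≤ v := by exact_mod_cast (mem_Ioc.1 hv).1.le
        rw [powKernel_of_le hiv, show s + 1 - α - 1 = -α + s by ring,
          rpow_add (hI.trans_le hiv)]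
        ring
    _ ≤ (i : ℝ) ^ (α - 1) * ((i : ℝ) ^ (s + 1 - α) / -(s + 1 - α)) := by
        gcongr; exact sum_Ioc_rpow_sub_one_le_of_neg (by linarith) hi M
    _ = (i : ℝ) ^ s / (α - 1 - s) := by rw [mul_div_assoc', ← rpow_add hI]; ring_nf

theorem sum_Ioc_zero_powKernel_mul_rpow_le {α s : ℝ} (hp₀ : 0 < α + s) (hp : α + s ≤ 1)
    (hq : s + 1 < α) {i : ℕ} (hi : 0 < i) (N : ℕ) :
    ∑ v ∈ Ioc 0 N, powKernel α i v * (v : ℝ) ^ s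
      ≤ (1 / (α + s) + 1 / (α - 1 - s)) * (i : ℝ) ^ s := by
  have hnonneg (v : ℕ) : 0 ≤ powKernel α i v * (v : ℝ) ^ s :=
    mul_nonneg (powKernel_nonneg α i.cast_nonneg v.cast_nonneg) (rpow_nonneg v.cast_nonneg s)
  calc _ ≤ ∑ v ∈ Ioc 0 (max N i), powKernel α i v * (v : ℝ) ^ s :=
        sum_le_sum_of_subset_of_nonneg (Ioc_subset_Ioc_right (le_max_left N i))
          fun v _ _ => hnonneg v
    _ = ∑ v ∈ Ioc 0 i, powKernel α i v * (v : ℝ) ^ s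
          + ∑ v ∈ Ioc i (max N i), powKernel α i v * (v : ℝ) ^ s :=
        (sum_Ioc_consecutive _ i.zero_le (le_max_right N i)).symm
    _ ≤ (i : ℝ) ^ s / (α + s) + (i : ℝ) ^ s / (α - 1 - s) :=
        add_le_add (sum_Ioc_zero_self_powKernel_mul_rpow_le hp₀ hp hi)
          (sum_Ioc_self_powKernel_mul_rpow_le hq hi _)
    _ = _ := by ring

theorem tsum_pnat_ofReal_le {f : ℕ → ℝ} {c : ℝ} (hf : ∀ n, 0 ≤ f n)
    (h : ∀ N, ∑ n ∈ Ioc 0 N, f n ≤ c) :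
    ∑' v : ℕ+, ENNReal.ofReal (f v) ≤ ENNReal.ofReal c := by
  rw [ENNReal.tsum_eq_iSup_sum]
  refine iSup_le fun s => ?_
  let e : ℕ+ ↪ ℕ := ⟨(↑), PNat.coe_injective⟩
  have hs : s.map e ⊆ Ioc 0 (s.sup (↑)) := by
    simp only [subset_iff, mem_map, mem_Ioc]
    rintro _ ⟨v, hv, rfl⟩
    exact ⟨v.pos, le_sup (f := ((↑) : ℕ+ → ℕ)) hv⟩
  calc ∑ v ∈ s, ENNReal.ofReal (f v) = ∑ n ∈ s.map e, ENNReal.ofReal (f n) :=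
        (sum_map s e fun n => ENNReal.ofReal (f n)).symm
    _ ≤ ∑ n ∈ Ioc 0 (s.sup (↑)), ENNReal.ofReal (f n) := sum_le_sum_of_subset hs
    _ = ENNReal.ofReal (∑ n ∈ Ioc 0 (s.sup (↑)), f n) :=
        (ENNReal.ofReal_sum_of_nonneg fun n _ => hf n).symm
    _ ≤ ENNReal.ofReal c := ENNReal.ofReal_le_ofReal (h _)

theorem gOne_eq_ofReal_powKernel (α : ℝ) (i j : ℕ+) :
    gOne α i j = ENNReal.ofReal (powKernel α i j) := by
  rw [gOne, powKernel, neg_sub]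

theorem tsum_gOne_mul_rpow_le {α s : ℝ} (hp₀ : 0 < α + s) (hp : α + s ≤ 1) (hq : s + 1 < α)
    (i : ℕ+) :
    ∑' v : ℕ+, gOne α i v * ENNReal.ofReal (((v : ℕ) : ℝ) ^ s)
      ≤ ENNReal.ofReal ((1 / (α + s) + 1 / (α - 1 - s)) * ((i : ℕ) : ℝ) ^ s) := by
  have hnonneg (n : ℕ) : 0 ≤ powKernel α i n * (n : ℝ) ^ s :=
    mul_nonneg (powKernel_nonneg α (Nat.cast_nonneg _) n.cast_nonneg) (rpow_nonneg n.cast_nonneg s)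
  simp_rw [gOne_eq_ofReal_powKernel,
    ← ENNReal.ofReal_mul (powKernel_nonneg α (Nat.cast_nonneg _) (Nat.cast_nonneg _))]
  exact tsum_pnat_ofReal_le hnonneg (sum_Ioc_zero_powKernel_mul_rpow_le hp₀ hp hq i.pos)

theorem tsum_gOne_mul_ofReal_le {α s c : ℝ} (hp₀ : 0 < α + s) (hp : α + s ≤ 1) (hq : s + 1 < α)
    (hc : 0 ≤ c) {f : ℕ+ → ℝ} (hf : ∀ v, f v ≤ ((v : ℕ) : ℝ) ^ s * c) (i : ℕ+) :
    ∑' v : ℕ+, gOne α i v * ENNReal.ofReal (f v)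
      ≤ ENNReal.ofReal ((1 / (α + s) + 1 / (α - 1 - s)) * ((i : ℕ) : ℝ) ^ s * c) := by
  calc _ ≤ ∑' v : ℕ+, gOne α i v * ENNReal.ofReal (((v : ℕ) : ℝ) ^ s) * ENNReal.ofReal c := by
        refine ENNReal.tsum_le_tsum fun v => ?_
        rw [mul_assoc, ← ENNReal.ofReal_mul (rpow_nonneg (Nat.cast_nonneg _) _)]
        gcongr
        exact hf v
    _ ≤ _ := by
        rw [ENNReal.tsum_mul_right, ENNReal.ofReal_mul' hc]
        gcongr
        exact tsum_gOne_mul_rpow_le hp₀ hp hq i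

theorem tsum_gOne_mul_powKernel_le {α b : ℝ} (hα : α ≤ 1) (hb : 1 / 2 ≤ b) (hbα : b < α)
    (i j : ℕ+) :
    ∑' v : ℕ+, gOne α i v * ENNReal.ofReal (powKernel b v j)
      ≤ ENNReal.ofReal ((1 / (α + b - 1) + 1 / (α - b)) * powKernel b i j) := by
  have hpos (v : ℕ+) : (0 : ℝ) < (v : ℕ) := Nat.cast_pos.2 v.pos
  rcases le_total (i : ℕ) (j : ℕ) with hij | hji
  · have h := tsum_gOne_mul_ofReal_le (α := α) (s := b - 1) (by linarith) (by linarith)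
      (by linarith) (rpow_nonneg (hpos j).le (-b))
      (fun v => powKernel_le_rpow_mul_rpow hb (hpos v) (hpos j)) i
    rw [powKernel_of_le (Nat.cast_le.2 hij)]
    convert h using 2
    ring
  · have h := tsum_gOne_mul_ofReal_le (α := α) (s := -b) (by linarith) (by linarith)
      (by linarith) (rpow_nonneg (hpos j).le (b - 1))
      (fun v => (powKernel_comm b _ _).trans_le
        ((powKernel_le_rpow_mul_rpow hb (hpos j) (hpos v)).trans_eq (mul_comm _ _))) i
    rw [powKernel_comm, powKernel_of_le (Nat.cast_le.2 hji)]
    convert h using 2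
    ring

theorem gIter_one (α : ℝ) (i j : ℕ+) : gIter α 1 i j = gOne α i j := by
  simp only [gIter, mul_ite, mul_one, mul_zero, tsum_ite_eq]

theorem gIter_succ_le {α b : ℝ} (hα : α ≤ 1) (hb : 1 / 2 ≤ b) (hbα : b < α) (n : ℕ)
    (i j : ℕ+) :
    gIter α (n + 1) i j
      ≤ ENNReal.ofReal ((1 / (α + b - 1) + 1 / (α - b)) ^ (n + 1) * powKernel b i j) := by
  set K := 1 / (α + b - 1) + 1 / (α - b)
  have hK : 1 ≤ K := by
    have : 1 ≤ 1 / (α + b - 1) := one_le_one_div (by linarith) (by linarith)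
    have : 0 < 1 / (α - b) := one_div_pos.2 (by linarith)
    linarith
  induction n generalizing i j with
  | zero =>
    have hi : (0 : ℝ) < (i : ℕ) := Nat.cast_pos.2 i.pos
    have hj : (0 : ℝ) < (j : ℕ) := Nat.cast_pos.2 j.pos
    rw [gIter_one, gOne_eq_ofReal_powKernel, pow_one]
    refine ENNReal.ofReal_le_ofReal ((powKernel_le_of_le hbα.le hi hj).trans ?_)
    exact le_mul_of_one_le_left (powKernel_nonneg b hi.le hj.le) hK
  | succ n ih =>
    have hKn : 0 ≤ K ^ (n + 1) := pow_nonneg (by linarith) _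
    calc gIter α (n + 2) i j
        = ∑' v : ℕ+, gOne α i v * gIter α (n + 1) v j := rfl
      _ ≤ ∑' v : ℕ+,
            ENNReal.ofReal (K ^ (n + 1)) * (gOne α i v * ENNReal.ofReal (powKernel b v j)) := by
          refine ENNReal.tsum_le_tsum fun v => ?_
          rw [mul_left_comm, ← ENNReal.ofReal_mul hKn]
          gcongr
          exact ih v j
      _ ≤ ENNReal.ofReal (K ^ (n + 1)) * ENNReal.ofReal (K * powKernel b i j) := by
          rw [ENNReal.tsum_mul_left]
          gcongr
          exact tsum_gOne_mul_powKernel_le hα hb hbα i j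
      _ = _ := by rw [← ENNReal.ofReal_mul hKn, ← mul_assoc, ← pow_succ]

/-- For `α ∈ (1/2,1)`, `b ∈ (1/2,α)` and `K_b = 1/(α+b−1) + 1/(α−b)`,
for every `k ≥ 1` and positive integers `i, j` the iterated-kernel series converge and
`g_k(i,j) ≤ K_b^k (min i j)^{−(1−b)} (max i j)^{−b}`. -/
theorem stmt6 (α b : ℝ) (hα : α ∈ Set.Ioo (1 / 2 : ℝ) 1) (hb : b ∈ Set.Ioo (1 / 2 : ℝ) α) :
    ∀ k : ℕ, 1 ≤ k → ∀ i j : ℕ+,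
      gIter α k i j ≤ ENNReal.ofReal
        ((1 / (α + b - 1) + 1 / (α - b)) ^ k *
          ((min ((i : ℕ) : ℝ) ((j : ℕ) : ℝ)) ^ (-(1 - b)) *
            (max ((i : ℕ) : ℝ) ((j : ℕ) : ℝ)) ^ (-b))) := by
  intro k hk i j
  obtain ⟨n, rfl⟩ := Nat.exists_eq_add_of_le' hk
  simpa only [powKernel, neg_sub] using gIter_succ_le hα.2.le hb.1.le hb.2 n i j

end
end

section
/- Fix a > 0 and a positive integer i. With w_k = c_F (n/k)^α for k ∈ [n] and ℓ_n = ∑_{k∈[n]} w_k, the following limits hold as n → ∞: (i) #{k ∈ [n] : w_k ≥ a ℓ_n/w_i} / (n (c_F w_i/(a ℓ_n))^{τ−1}) → 1; (ii) (∑_{k∈[n]: w_k > a ℓ_n/w_i} w_k) / ((c_F^{τ−1} n/(1−α)) (w_i/(a ℓ_n))^{τ−2}) → 1; (iii) (∑_{k∈[n]: w_k ≤ a ℓ_n/w_i} w_k²) / ((c_F^{τ−1} n/(2α−1)) (a ℓ_n/w_i)^{3−τ}) → 1. -/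
open MeasureTheory Real Filter
open scoped ENNReal NNReal

noncomputable section

/-- The weight `w_i = c_F (n/i)^α` of vertex `i ∈ [n]`. -/
def wFn (τ cF : ℝ) (n i : ℕ) : ℝ := cF * ((n : ℝ) / (i : ℝ)) ^ alphaOf τ

/-- The total weight `ℓ_n = ∑_{i ∈ [n]} w_i`. -/
def ellFn (τ cF : ℝ) (n : ℕ) : ℝ := ∑ i ∈ Finset.Icc 1 n, wFn τ cF n i

/-- The critical percolation probability `π_c(λ) = λ n^{−(3−τ)/2}`. -/
def piC (τ lam : ℝ) (n : ℕ) : ℝ := lam * (n : ℝ) ^ (-((3 - τ) / 2))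

/-! Put `X = n (c_F / b)^{τ-1}` for the level `b = a ℓ_n / w_i`. Then `w_k = b (X/k)^α`, so the
three index sets are `{k ≤ X}`, `{k < X}` and `{X ≤ k ≤ n}`, and the normalisations in (i)–(iii)
are exactly `X`, `b X / (1-α)` and `b² X / (2α-1)`. Comparing `∑ k^{-q}` with `∫ t^{-q} dt` gives
`∑_{k<X} k^{-α} ∼ X^{1-α} / (1-α)` and `∑_{X≤k≤n} k^{-2α} ∼ X^{1-2α} / (2α-1)` as soon as
`X → ∞` and `n / X → ∞`. Both hold because `ℓ_n ∼ μ n` makes `b` grow like `n^{1-α}`, hence `X`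
like `n^{3-τ}`. -/

open Topology

theorem AntitoneOn.sum_Ico_le_integral_add {f : ℝ → ℝ} {a b : ℕ} (hab : a ≤ b)
    (hf : AntitoneOn f (Set.Icc a b)) :
    ∑ k ∈ Finset.Ico a b, f k ≤ (∫ x in (a : ℝ)..b, f x) + (f a - f b) := by
  have htel : ∑ k ∈ Finset.Ico a b, (f ↑(k + 1) - f k) = f b - f a :=
    Finset.sum_Ico_sub (fun k : ℕ => f k) hab
  rw [Finset.sum_sub_distrib] at htel
  linarith [hf.sum_le_integral_Ico hab]

theorem integral_rpow_neg_of_pos {q a b : ℝ} (hq : q ≠ 1) (ha : 0 < a) (hab : a ≤ b) :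
    ∫ x in a..b, x ^ (-q) = (b ^ (1 - q) - a ^ (1 - q)) / (1 - q) := by
  rw [integral_rpow (Or.inr ⟨by contrapose! hq; linarith, ?_⟩), neg_add_eq_sub]
  rw [Set.uIcc_of_le hab]
  exact fun h => ha.not_ge h.1

theorem sum_Ico_rpow_neg_mem_Icc {q : ℝ} (hq0 : 0 ≤ q) (hq1 : q ≠ 1) {m M : ℕ} (hm : 1 ≤ m)
    (hmM : m ≤ M) :
    ∑ k ∈ Finset.Ico m M, (k : ℝ) ^ (-q)
      ∈ Set.Icc (((M : ℝ) ^ (1 - q) - (m : ℝ) ^ (1 - q)) / (1 - q))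
        (((M : ℝ) ^ (1 - q) - (m : ℝ) ^ (1 - q)) / (1 - q) + (m : ℝ) ^ (-q)) := by
  have hm0 : (0 : ℝ) < m := by exact_mod_cast hm
  have hmM' : (m : ℝ) ≤ M := by exact_mod_cast hmM
  have hanti : AntitoneOn (fun x : ℝ => x ^ (-q)) (Set.Icc m M) :=
    (Real.antitoneOn_rpow_Ioi_of_exponent_nonpos (neg_nonpos.2 hq0)).mono
      fun x hx => hm0.trans_le hx.1
  have hint := integral_rpow_neg_of_pos hq1 hm0 hmM'
  refine ⟨hint ▸ hanti.integral_le_sum_Ico hmM, ?_⟩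
  have := hanti.sum_Ico_le_integral_add hmM
  have hMq : 0 ≤ (M : ℝ) ^ (-q) := by positivity
  rw [hint] at this
  linarith

theorem tendsto_sum_Ico_one_rpow_neg_div {ι : Type*} {l : Filter ι} {q : ℝ} (hq0 : 0 ≤ q)
    (hq1 : q < 1) {x : ι → ℝ} {M : ι → ℕ} (hx : Tendsto x l atTop)
    (hM : Tendsto (fun j => (M j : ℝ) / x j) l (𝓝 1)) :
    Tendsto (fun j => (∑ k ∈ Finset.Ico 1 (M j), (k : ℝ) ^ (-q)) / x j ^ (1 - q)) l
      (𝓝 (1 / (1 - q))) := by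
  set p := 1 - q
  have hp : 0 < p := sub_pos.2 hq1
  have hxp : Tendsto (fun j => (x j ^ p)⁻¹) l (𝓝 0) :=
    ((tendsto_rpow_atTop hp).comp hx).inv_tendsto_atTop
  have hMp : Tendsto (fun j => ((M j : ℝ) / x j) ^ p) l (𝓝 1) := by
    simpa using hM.rpow_const (Or.inl one_ne_zero)
  have hlow : Tendsto (fun j => (((M j : ℝ) / x j) ^ p - (x j ^ p)⁻¹) / p) l (𝓝 (1 / p)) := by
    simpa using (hMp.sub hxp).div_const p
  have hup := hlow.add hxp
  rw [add_zero] at hup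
  have hM1 : ∀ᶠ j in l, 1 ≤ M j := by
    filter_upwards [hM.eventually (lt_mem_nhds one_half_lt_one), hx.eventually_ge_atTop 2]
      with j hMj hxj
    have : (1 : ℝ) < M j := by
      rw [lt_div_iff₀ (by linarith)] at hMj
      linarith
    exact_mod_cast this.le
  have hbounds : ∀ᶠ j in l,
      (((M j : ℝ) / x j) ^ p - (x j ^ p)⁻¹) / p
          ≤ (∑ k ∈ Finset.Ico 1 (M j), (k : ℝ) ^ (-q)) / x j ^ p ∧
        (∑ k ∈ Finset.Ico 1 (M j), (k : ℝ) ^ (-q)) / x j ^ p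
          ≤ (((M j : ℝ) / x j) ^ p - (x j ^ p)⁻¹) / p + (x j ^ p)⁻¹ := by
    filter_upwards [hM1, hx.eventually_gt_atTop 0] with j hMj hxj
    obtain ⟨hlo, hhi⟩ := sum_Ico_rpow_neg_mem_Icc hq0 hq1.ne le_rfl hMj
    simp only [Nat.cast_one, Real.one_rpow] at hlo hhi
    have hg : (((M j : ℝ) / x j) ^ p - (x j ^ p)⁻¹) / p = ((M j : ℝ) ^ p - 1) / p / x j ^ p := by
      rw [Real.div_rpow (Nat.cast_nonneg _) hxj.le]
      field_simp
    rw [hg, ← one_div, ← add_div]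
    constructor <;> gcongr
  exact tendsto_of_tendsto_of_tendsto_of_le_of_le' hlow hup (hbounds.mono fun _ h => h.1)
    (hbounds.mono fun _ h => h.2)

theorem tendsto_rpow_mul_sum_Ico_ceil_rpow_neg {ι : Type*} {l : Filter ι} {q : ℝ} (hq : 1 < q)
    {x : ι → ℝ} {N : ι → ℕ} (hx : Tendsto x l atTop)
    (hN : Tendsto (fun j => (N j : ℝ) / x j) l atTop) :
    Tendsto (fun j => x j ^ (q - 1) * ∑ k ∈ Finset.Ico ⌈x j⌉₊ (N j), (k : ℝ) ^ (-q)) l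
      (𝓝 (1 / (q - 1))) := by
  set p := q - 1
  have hp : 0 < p := sub_pos.2 hq
  have hm : Tendsto (fun j => (⌈x j⌉₊ : ℝ) / x j) l (𝓝 1) := tendsto_nat_ceil_div_atTop.comp hx
  have hmp : Tendsto (fun j => ((⌈x j⌉₊ : ℝ) / x j) ^ (-p)) l (𝓝 1) := by
    simpa using hm.rpow_const (Or.inl one_ne_zero)
  have hmq : Tendsto (fun j => ((⌈x j⌉₊ : ℝ) / x j) ^ (-q) / x j) l (𝓝 0) := by
    simpa using (hm.rpow_const (p := -q) (Or.inl one_ne_zero)).div_atTop hx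
  have hNp : Tendsto (fun j => ((N j : ℝ) / x j) ^ (-p)) l (𝓝 0) :=
    (tendsto_rpow_neg_atTop hp).comp hN
  have hlow : Tendsto (fun j => (((⌈x j⌉₊ : ℝ) / x j) ^ (-p) - ((N j : ℝ) / x j) ^ (-p)) / p) l
      (𝓝 (1 / p)) := by
    simpa using (hmp.sub hNp).div_const p
  have hup := hlow.add hmq
  rw [add_zero] at hup
  have hbounds : ∀ᶠ j in l,
      (((⌈x j⌉₊ : ℝ) / x j) ^ (-p) - ((N j : ℝ) / x j) ^ (-p)) / p
          ≤ x j ^ p * ∑ k ∈ Finset.Ico ⌈x j⌉₊ (N j), (k : ℝ) ^ (-q) ∧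
        x j ^ p * ∑ k ∈ Finset.Ico ⌈x j⌉₊ (N j), (k : ℝ) ^ (-q)
          ≤ (((⌈x j⌉₊ : ℝ) / x j) ^ (-p) - ((N j : ℝ) / x j) ^ (-p)) / p
            + ((⌈x j⌉₊ : ℝ) / x j) ^ (-q) / x j := by
    filter_upwards [hx.eventually_gt_atTop 0, hN.eventually_ge_atTop 1] with j hxj hNj
    have hm1 : 1 ≤ ⌈x j⌉₊ := Nat.one_le_iff_ne_zero.2 (Nat.ceil_pos.2 hxj).ne'
    have hmN : ⌈x j⌉₊ ≤ N j := Nat.ceil_le.2 ((one_le_div hxj).1 hNj)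
    obtain ⟨hlo, hhi⟩ := sum_Ico_rpow_neg_mem_Icc (q := q) (by linarith) hq.ne' hm1 hmN
    have hg : (((⌈x j⌉₊ : ℝ) / x j) ^ (-p) - ((N j : ℝ) / x j) ^ (-p)) / p
        = x j ^ p * (((N j : ℝ) ^ (1 - q) - (⌈x j⌉₊ : ℝ) ^ (1 - q)) / (1 - q)) := by
      rw [Real.div_rpow (Nat.cast_nonneg _) hxj.le, Real.div_rpow (Nat.cast_nonneg _) hxj.le,
        show 1 - q = -p by ring, Real.rpow_neg hxj.le]
      field_simp
      ring
    have he : ((⌈x j⌉₊ : ℝ) / x j) ^ (-q) / x j = x j ^ p * (⌈x j⌉₊ : ℝ) ^ (-q) := by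
      rw [Real.div_rpow (Nat.cast_nonneg _) hxj.le, Real.rpow_neg hxj.le, Real.rpow_sub_one hxj.ne']
      field_simp
    rw [hg, he, ← mul_add]
    constructor <;> gcongr
  exact tendsto_of_tendsto_of_tendsto_of_le_of_le' hlow hup (hbounds.mono fun _ h => h.1)
    (hbounds.mono fun _ h => h.2)

theorem Finset.Icc_filter_natCast_le {x : ℝ} {n : ℕ} (hx : 0 ≤ x) (hxn : x ≤ n) :
    (Finset.Icc 1 n).filter (fun k : ℕ => (k : ℝ) ≤ x) = Finset.Icc 1 ⌊x⌋₊ := by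
  have : ⌊x⌋₊ ≤ n := Nat.floor_le_of_le hxn
  ext k
  simp only [Finset.mem_filter, Finset.mem_Icc, ← Nat.le_floor_iff hx]
  omega

theorem Finset.Icc_filter_natCast_lt {x : ℝ} {n : ℕ} (hxn : x ≤ n) :
    (Finset.Icc 1 n).filter (fun k : ℕ => (k : ℝ) < x) = Finset.Ico 1 ⌈x⌉₊ := by
  have : ⌈x⌉₊ ≤ n := Nat.ceil_le.2 hxn
  ext k
  simp only [Finset.mem_filter, Finset.mem_Icc, Finset.mem_Ico, ← Nat.lt_ceil]
  omega

theorem Finset.Icc_filter_le_natCast {x : ℝ} (hx : 0 < x) (n : ℕ) :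
    (Finset.Icc 1 n).filter (fun k : ℕ => x ≤ (k : ℝ)) = Finset.Ico ⌈x⌉₊ (n + 1) := by
  have : 0 < ⌈x⌉₊ := Nat.ceil_pos.2 hx
  ext k
  simp only [Finset.mem_filter, Finset.mem_Icc, Finset.mem_Ico, ← Nat.ceil_le]
  omega

theorem mul_div_rpow_le_iff {b x y α : ℝ} (hb : 0 < b) (hα : 0 < α) (hx : 0 ≤ x) (hy : 0 < y) :
    b * (x / y) ^ α ≤ b ↔ x ≤ y := by
  rw [mul_le_iff_le_one_right hb, ← Real.one_rpow α,
    Real.rpow_le_rpow_iff (div_nonneg hx hy.le) zero_le_one hα, div_le_one hy]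

theorem mul_div_rpow_lt_iff {b x y α : ℝ} (hb : 0 < b) (hα : 0 < α) (hx : 0 ≤ x) (hy : 0 < y) :
    b * (x / y) ^ α < b ↔ x < y := by
  rw [mul_lt_iff_lt_one_right hb, Real.rpow_lt_one_iff' (div_nonneg hx hy.le) hα, div_lt_one hy]

theorem tendsto_atTop_of_tendsto_div_rpow {f : ℕ → ℝ} {p β : ℝ} (hp : 0 < p) (hβ : 0 < β)
    (hf : Tendsto (fun n : ℕ => f n / (n : ℝ) ^ p) atTop (𝓝 β)) : Tendsto f atTop atTop := by
  refine (hf.pos_mul_atTop hβ ((tendsto_rpow_atTop hp).comp tendsto_natCast_atTop_atTop)).congr' ?_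
  filter_upwards [eventually_gt_atTop 0] with n hn
  have : (0 : ℝ) < (n : ℝ) ^ p := by positivity
  exact div_mul_cancel₀ _ this.ne'

section PowerLawWeights

variable {τ cF : ℝ}

theorem alphaOf_mul_sub_one (hτ : τ ≠ 1) : alphaOf τ * (τ - 1) = 1 :=
  one_div_mul_cancel (sub_ne_zero.2 hτ)

theorem alphaOf_pos (hτ : 1 < τ) : 0 < alphaOf τ := one_div_pos.2 (sub_pos.2 hτ)

theorem alphaOf_lt_one (hτ : 2 < τ) : alphaOf τ < 1 := by
  rw [alphaOf, div_lt_one (by linarith)]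
  linarith

theorem one_lt_two_mul_alphaOf (hτ1 : 1 < τ) (hτ3 : τ < 3) : 1 < 2 * alphaOf τ := by
  rw [alphaOf, mul_one_div, one_lt_div (by linarith)]
  linarith

def levelIndex (τ cF b : ℝ) (n : ℕ) : ℝ := n * (cF / b) ^ (τ - 1)

theorem wFn_eq_mul_levelIndex_div_rpow (hτ : τ ≠ 1) (hcF : 0 ≤ cF) {b : ℝ} (hb : 0 < b)
    (n k : ℕ) : wFn τ cF n k = b * (levelIndex τ cF b n / k) ^ alphaOf τ := by
  have hc : 0 ≤ cF / b := div_nonneg hcF hb.le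
  rw [levelIndex, mul_div_right_comm, Real.mul_rpow (by positivity) (by positivity),
    ← Real.rpow_mul hc, mul_comm (τ - 1), alphaOf_mul_sub_one hτ, Real.rpow_one, wFn]
  field_simp

theorem wFn_le_iff (hτ : 1 < τ) (hcF : 0 ≤ cF) {b : ℝ} (hb : 0 < b) (n : ℕ) {k : ℕ}
    (hk : 1 ≤ k) : wFn τ cF n k ≤ b ↔ levelIndex τ cF b n ≤ k := by
  rw [wFn_eq_mul_levelIndex_div_rpow hτ.ne' hcF hb]
  exact mul_div_rpow_le_iff hb (alphaOf_pos hτ) (by unfold levelIndex; positivity)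
    (by exact_mod_cast hk)

theorem wFn_lt_iff (hτ : 1 < τ) (hcF : 0 ≤ cF) {b : ℝ} (hb : 0 < b) (n : ℕ) {k : ℕ}
    (hk : 1 ≤ k) : wFn τ cF n k < b ↔ levelIndex τ cF b n < k := by
  rw [wFn_eq_mul_levelIndex_div_rpow hτ.ne' hcF hb]
  exact mul_div_rpow_lt_iff hb (alphaOf_pos hτ) (by unfold levelIndex; positivity)
    (by exact_mod_cast hk)

theorem rpow_mul_levelIndex (hcF : 0 ≤ cF) {b : ℝ} (hb : 0 < b) (s : ℝ) (n : ℕ) :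
    b ^ s * levelIndex τ cF b n = cF ^ (τ - 1) * n * b ^ (s - (τ - 1)) := by
  rw [levelIndex, Real.div_rpow hcF hb.le, Real.rpow_sub hb s]
  ring

theorem Icc_filter_le_wFn_eq (hτ : 1 < τ) (hcF : 0 ≤ cF) {b : ℝ} (hb : 0 < b) {n : ℕ}
    (hXn : levelIndex τ cF b n ≤ n) :
    (Finset.Icc 1 n).filter (fun k => b ≤ wFn τ cF n k)
      = Finset.Icc 1 ⌊levelIndex τ cF b n⌋₊ := by
  rw [← Finset.Icc_filter_natCast_le (by unfold levelIndex; positivity) hXn]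
  refine Finset.filter_congr fun k hk => ?_
  rw [← not_lt, wFn_lt_iff hτ hcF hb n (Finset.mem_Icc.1 hk).1, not_lt]

theorem Icc_filter_lt_wFn_eq (hτ : 1 < τ) (hcF : 0 ≤ cF) {b : ℝ} (hb : 0 < b) {n : ℕ}
    (hXn : levelIndex τ cF b n ≤ n) :
    (Finset.Icc 1 n).filter (fun k => b < wFn τ cF n k)
      = Finset.Ico 1 ⌈levelIndex τ cF b n⌉₊ := by
  rw [← Finset.Icc_filter_natCast_lt hXn]
  refine Finset.filter_congr fun k hk => ?_
  rw [← not_le, wFn_le_iff hτ hcF hb n (Finset.mem_Icc.1 hk).1, not_le]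

theorem Icc_filter_wFn_le_eq (hτ : 1 < τ) (hcF : 0 ≤ cF) {b : ℝ} (hb : 0 < b) {n : ℕ}
    (hX : 0 < levelIndex τ cF b n) :
    (Finset.Icc 1 n).filter (fun k => wFn τ cF n k ≤ b)
      = Finset.Ico ⌈levelIndex τ cF b n⌉₊ (n + 1) := by
  rw [← Finset.Icc_filter_le_natCast hX]
  exact Finset.filter_congr fun k hk => wFn_le_iff hτ hcF hb n (Finset.mem_Icc.1 hk).1

theorem tendsto_natCast_div_levelIndex (hτ : 1 < τ) (hcF : 0 < cF) {b : ℕ → ℝ}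
    (hb : Tendsto b atTop atTop) :
    Tendsto (fun n : ℕ => (n : ℝ) / levelIndex τ cF (b n) n) atTop atTop := by
  refine ((tendsto_rpow_atTop (sub_pos.2 hτ)).comp (hb.atTop_div_const hcF)).congr' ?_
  filter_upwards [hb.eventually_gt_atTop 0, eventually_gt_atTop 0] with n hbn hn
  have hn' : (n : ℝ) ≠ 0 := by exact_mod_cast hn.ne'
  rw [Function.comp_apply, levelIndex, div_mul_cancel_left₀ hn', ← Real.inv_rpow
    (div_nonneg hcF.le hbn.le), inv_div]

theorem eventually_levelIndex_le (hτ : 1 < τ) (hcF : 0 < cF) {b : ℕ → ℝ}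
    (hb : Tendsto b atTop atTop) (hX : Tendsto (fun n => levelIndex τ cF (b n) n) atTop atTop) :
    ∀ᶠ n : ℕ in atTop, levelIndex τ cF (b n) n ≤ n := by
  filter_upwards [(tendsto_natCast_div_levelIndex hτ hcF hb).eventually_ge_atTop 1,
    hX.eventually_gt_atTop 0] with n hn hXn
  rwa [one_le_div hXn] at hn

theorem tendsto_card_filter_le_wFn_div (hτ : 1 < τ) (hcF : 0 < cF) {b : ℕ → ℝ}
    (hb : Tendsto b atTop atTop) (hX : Tendsto (fun n => levelIndex τ cF (b n) n) atTop atTop) :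
    Tendsto (fun n : ℕ =>
        (((Finset.Icc 1 n).filter (fun k => b n ≤ wFn τ cF n k)).card : ℝ)
          / levelIndex τ cF (b n) n) atTop (𝓝 1) := by
  refine (tendsto_nat_floor_div_atTop.comp hX).congr' ?_
  filter_upwards [hb.eventually_gt_atTop 0, eventually_levelIndex_le hτ hcF hb hX] with n hbn hXn
  rw [Function.comp_apply, Icc_filter_le_wFn_eq hτ hcF.le hbn hXn, Nat.card_Icc,
    Nat.add_sub_cancel]

theorem tendsto_sum_filter_lt_wFn_div (hτ : 2 < τ) (hcF : 0 < cF) {b : ℕ → ℝ}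
    (hb : Tendsto b atTop atTop) (hX : Tendsto (fun n => levelIndex τ cF (b n) n) atTop atTop) :
    Tendsto (fun n : ℕ =>
        (∑ k ∈ (Finset.Icc 1 n).filter (fun k => b n < wFn τ cF n k), wFn τ cF n k)
          / (cF ^ (τ - 1) * (n : ℝ) / (1 - alphaOf τ) * (b n)⁻¹ ^ (τ - 2))) atTop (𝓝 1) := by
  have hτ1 : 1 < τ := by linarith
  have hα : 0 < 1 - alphaOf τ := sub_pos.2 (alphaOf_lt_one hτ)
  have hhead := (tendsto_sum_Ico_one_rpow_neg_div (alphaOf_pos hτ1).le (alphaOf_lt_one hτ) hX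
    (tendsto_nat_ceil_div_atTop.comp hX)).const_mul (1 - alphaOf τ)
  rw [mul_one_div_cancel hα.ne'] at hhead
  set α := alphaOf τ
  refine hhead.congr' ?_
  filter_upwards [hb.eventually_gt_atTop 0, hX.eventually_gt_atTop 0,
    eventually_levelIndex_le hτ1 hcF hb hX] with n hbn hX0 hXn
  set X := levelIndex τ cF (b n) n
  have hsum : ∑ k ∈ Finset.Ico 1 ⌈X⌉₊, wFn τ cF n k
      = b n * X ^ α * ∑ k ∈ Finset.Ico 1 ⌈X⌉₊, (k : ℝ) ^ (-α) := by
    rw [Finset.mul_sum]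
    refine Finset.sum_congr rfl fun k _ => ?_
    rw [wFn_eq_mul_levelIndex_div_rpow hτ1.ne' hcF.le hbn, Real.div_rpow hX0.le (Nat.cast_nonneg k),
      Real.rpow_neg (Nat.cast_nonneg k), div_eq_mul_inv, mul_assoc]
  have hden : cF ^ (τ - 1) * (n : ℝ) / (1 - α) * (b n)⁻¹ ^ (τ - 2) = b n * X / (1 - α) := by
    have := rpow_mul_levelIndex (τ := τ) hcF.le hbn 1 n
    rw [Real.rpow_one] at this
    rw [this, Real.inv_rpow hbn.le, ← Real.rpow_neg hbn.le]
    ring_nf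
  rw [Icc_filter_lt_wFn_eq hτ1 hcF.le hbn hXn, hsum, hden, Real.rpow_sub hX0, Real.rpow_one]
  field_simp

theorem tendsto_sum_filter_wFn_le_sq_div (hτ1 : 1 < τ) (hτ3 : τ < 3) (hcF : 0 < cF)
    {b : ℕ → ℝ} (hb : Tendsto b atTop atTop)
    (hX : Tendsto (fun n => levelIndex τ cF (b n) n) atTop atTop) :
    Tendsto (fun n : ℕ =>
        (∑ k ∈ (Finset.Icc 1 n).filter (fun k => wFn τ cF n k ≤ b n), wFn τ cF n k ^ 2)
          / (cF ^ (τ - 1) * (n : ℝ) / (2 * alphaOf τ - 1) * b n ^ (3 - τ))) atTop (𝓝 1) := by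
  have hα : 0 < 2 * alphaOf τ - 1 := sub_pos.2 (one_lt_two_mul_alphaOf hτ1 hτ3)
  have hN : Tendsto (fun n : ℕ => ((n + 1 : ℕ) : ℝ) / levelIndex τ cF (b n) n) atTop atTop := by
    refine tendsto_atTop_mono' _ ?_ (tendsto_natCast_div_levelIndex hτ1 hcF hb)
    filter_upwards [hX.eventually_gt_atTop 0] with n hXn
    gcongr
    exact_mod_cast n.le_succ
  have htail := (tendsto_rpow_mul_sum_Ico_ceil_rpow_neg
    (one_lt_two_mul_alphaOf hτ1 hτ3) hX hN).const_mul (2 * alphaOf τ - 1)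
  rw [mul_one_div_cancel hα.ne'] at htail
  refine htail.congr' ?_
  filter_upwards [hb.eventually_gt_atTop 0, hX.eventually_gt_atTop 0] with n hbn hX0
  set X := levelIndex τ cF (b n) n
  have hsum : ∑ k ∈ Finset.Ico ⌈X⌉₊ (n + 1), wFn τ cF n k ^ 2
      = b n ^ 2 * X ^ (2 * alphaOf τ)
          * ∑ k ∈ Finset.Ico ⌈X⌉₊ (n + 1), (k : ℝ) ^ (-(2 * alphaOf τ)) := by
    rw [Finset.mul_sum]
    refine Finset.sum_congr rfl fun k _ => ?_
    rw [wFn_eq_mul_levelIndex_div_rpow hτ1.ne' hcF.le hbn, mul_pow,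
      ← Real.rpow_mul_natCast (div_nonneg hX0.le (Nat.cast_nonneg k)),
      Real.div_rpow hX0.le (Nat.cast_nonneg k), Real.rpow_neg (Nat.cast_nonneg k)]
    push_cast
    ring_nf
  have hden : cF ^ (τ - 1) * (n : ℝ) / (2 * alphaOf τ - 1) * b n ^ (3 - τ)
      = b n ^ 2 * X / (2 * alphaOf τ - 1) := by
    have := rpow_mul_levelIndex (τ := τ) hcF.le hbn 2 n
    rw [Real.rpow_two] at this
    rw [this]
    ring_nf
  rw [Icc_filter_wFn_le_eq hτ1 hcF.le hbn hX0, hsum, hden, Real.rpow_sub_one hX0.ne']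
  field_simp

theorem tendsto_ellFn_div_natCast (hτ : 2 < τ) :
    Tendsto (fun n : ℕ => ellFn τ cF n / n) atTop (𝓝 (muOf τ cF)) := by
  have hα0 := alphaOf_pos (by linarith : 1 < τ)
  have hsucc : Tendsto (fun n : ℕ => ((n + 1 : ℕ) : ℝ) / n) atTop (𝓝 1) := by
    have h := (tendsto_one_div_atTop_nhds_zero_nat (𝕜 := ℝ)).const_add 1
    rw [add_zero] at h
    refine h.congr' ?_
    filter_upwards [eventually_gt_atTop 0] with n hn
    have : (n : ℝ) ≠ 0 := by exact_mod_cast hn.ne'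
    push_cast
    field_simp
  have hhead := (tendsto_sum_Ico_one_rpow_neg_div hα0.le (alphaOf_lt_one hτ)
    tendsto_natCast_atTop_atTop hsucc).const_mul cF
  rw [muOf, div_eq_mul_one_div]
  refine hhead.congr' ?_
  filter_upwards [eventually_gt_atTop 0] with n hn
  have hn' : (0 : ℝ) < n := by exact_mod_cast hn
  rw [ellFn, ← Finset.Ico_add_one_right_eq_Icc]
  simp only [Finset.sum_div, Finset.mul_sum]
  refine Finset.sum_congr rfl fun k _ => ?_
  rw [wFn, Real.div_rpow hn'.le (Nat.cast_nonneg k), Real.rpow_neg (Nat.cast_nonneg k),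
    Real.rpow_sub hn', Real.rpow_one]
  field_simp

theorem tendsto_threshold_div_rpow (hτ : 2 < τ) (a : ℝ) {i : ℕ} (hi : 1 ≤ i) :
    Tendsto (fun n : ℕ => a * ellFn τ cF n / wFn τ cF n i / (n : ℝ) ^ (1 - alphaOf τ)) atTop
      (𝓝 (a * (i : ℝ) ^ alphaOf τ / cF * muOf τ cF)) := by
  have hi' : (0 : ℝ) < i := by exact_mod_cast hi
  refine ((tendsto_ellFn_div_natCast hτ).const_mul _).congr' ?_
  filter_upwards [eventually_gt_atTop 0] with n hn
  have hn' : (0 : ℝ) < n := by exact_mod_cast hn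
  rw [wFn, Real.div_rpow hn'.le hi'.le, Real.rpow_sub hn', Real.rpow_one]
  field_simp

theorem tendsto_levelIndex_atTop (hτ1 : 1 < τ) (hτ3 : τ < 3) (hcF : 0 < cF) {b : ℕ → ℝ}
    {β : ℝ} (hβ : 0 < β)
    (hb : Tendsto (fun n : ℕ => b n / (n : ℝ) ^ (1 - alphaOf τ)) atTop (𝓝 β)) :
    Tendsto (fun n => levelIndex τ cF (b n) n) atTop atTop := by
  have hc : Tendsto (fun n : ℕ => (cF / (b n / (n : ℝ) ^ (1 - alphaOf τ))) ^ (τ - 1)) atTop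
      (𝓝 ((cF / β) ^ (τ - 1))) :=
    (tendsto_const_nhds.div hb hβ.ne').rpow_const (Or.inl (div_pos hcF hβ).ne')
  refine (Tendsto.atTop_mul_pos (by positivity)
    ((tendsto_rpow_atTop (by linarith : (0 : ℝ) < 3 - τ)).comp tendsto_natCast_atTop_atTop)
    hc).congr' ?_
  filter_upwards [hb.eventually (lt_mem_nhds hβ), eventually_gt_atTop 0] with n hβn hn
  have hn' : (0 : ℝ) < n := by exact_mod_cast hn
  have hbn : 0 < b n := (div_pos_iff_of_pos_right (by positivity)).1 hβn
  have hexp : (1 - alphaOf τ) * (τ - 1) = τ - 2 := by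
    linear_combination -alphaOf_mul_sub_one hτ1.ne'
  rw [Function.comp_apply, div_div_eq_mul_div, Real.div_rpow (by positivity) hbn.le,
    Real.mul_rpow hcF.le (by positivity), ← Real.rpow_mul hn'.le, hexp, levelIndex,
    Real.div_rpow hcF.le hbn.le]
  have hn3 : (n : ℝ) ^ (3 - τ) * n ^ (τ - 2) = n := by
    rw [← Real.rpow_add hn']
    norm_num
  linear_combination (cF ^ (τ - 1) / b n ^ (τ - 1)) * hn3

end PowerLawWeights

/-- With `w_k = c_F (n/k)^α` and `ℓ_n = ∑_{k∈[n]} w_k`, for fixed `a > 0`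
and a fixed positive integer `i`, as `n → ∞`:
(i) `#{k ∈ [n] : w_k ≥ a ℓ_n/w_i} ∼ n (c_F w_i/(a ℓ_n))^{τ−1}`;
(ii) `∑_{k : w_k > a ℓ_n/w_i} w_k ∼ (c_F^{τ−1} n/(1−α)) (w_i/(a ℓ_n))^{τ−2}`;
(iii) `∑_{k : w_k ≤ a ℓ_n/w_i} w_k² ∼ (c_F^{τ−1} n/(2α−1)) (a ℓ_n/w_i)^{3−τ}`. -/
theorem stmt9 (τ cF : ℝ) (hτ : τ ∈ Set.Ioo (2 : ℝ) 3) (hcF : 0 < cF)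
    (a : ℝ) (ha : 0 < a) (i : ℕ) (hi : 1 ≤ i) :
    Tendsto
      (fun n : ℕ =>
        (((Finset.Icc 1 n).filter
            (fun k => a * ellFn τ cF n / wFn τ cF n i ≤ wFn τ cF n k)).card : ℝ) /
          ((n : ℝ) * (cF * wFn τ cF n i / (a * ellFn τ cF n)) ^ (τ - 1)))
      atTop (nhds 1)
    ∧ Tendsto
        (fun n : ℕ =>
          (∑ k ∈ (Finset.Icc 1 n).filter
              (fun k => a * ellFn τ cF n / wFn τ cF n i < wFn τ cF n k), wFn τ cF n k) /
            ((cF ^ (τ - 1) * (n : ℝ) / (1 - alphaOf τ)) *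
              (wFn τ cF n i / (a * ellFn τ cF n)) ^ (τ - 2)))
        atTop (nhds 1)
    ∧ Tendsto
        (fun n : ℕ =>
          (∑ k ∈ (Finset.Icc 1 n).filter
              (fun k => wFn τ cF n k ≤ a * ellFn τ cF n / wFn τ cF n i), wFn τ cF n k ^ 2) /
            ((cF ^ (τ - 1) * (n : ℝ) / (2 * alphaOf τ - 1)) *
              (a * ellFn τ cF n / wFn τ cF n i) ^ (3 - τ)))
        atTop (nhds 1) := by
  obtain ⟨hτ2, hτ3⟩ := hτ
  have hτ1 : 1 < τ := by linarith
  have hα : 0 < 1 - alphaOf τ := sub_pos.2 (alphaOf_lt_one hτ2)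
  have hβ : 0 < a * (i : ℝ) ^ alphaOf τ / cF * muOf τ cF := by
    have : (0 : ℝ) < i := by exact_mod_cast hi
    have : 0 < muOf τ cF := div_pos hcF hα
    positivity
  have hb' := tendsto_threshold_div_rpow (cF := cF) hτ2 a hi
  have hb := tendsto_atTop_of_tendsto_div_rpow hα hβ hb'
  have hX := tendsto_levelIndex_atTop hτ1 hτ3 hcF hβ hb'
  refine ⟨?_, ?_, tendsto_sum_filter_wFn_le_sq_div hτ1 hτ3 hcF hb hX⟩
  · simpa only [levelIndex, div_div_eq_mul_div] using tendsto_card_filter_le_wFn_div hτ1 hcF hb hX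
  · simpa only [inv_div] using tendsto_sum_filter_lt_wFn_div hτ2 hcF hb hX
end
end

section
/- Let α ∈ (1/2, 1) and b ∈ (1/2, α). There exists a constant C = C(α, b) < ∞ such that for every positive integer i: ∑_{j=1}^∞ (min(i,j))^{−(1−b)} (max(i,j))^{−b} j^{−α} ≤ C i^{−b}. -/
/-! Since `b ≥ 1/2`, moving the exponent `b` from `max i j` onto `i` and the exponent `1 - b`
onto `j` can only increase the summand, which gives the termwise bound
`i ^ (-b) * j ^ (-(1 - b + α))`; as `1 - b + α > 1`, the series in `j` converges. -/

lemma Real.min_rpow_neg_mul_max_rpow_neg_le {x y p q : ℝ} (hx : 0 < x) (hy : 0 < y)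
    (hpq : p ≤ q) : min x y ^ (-p) * max x y ^ (-q) ≤ x ^ (-q) * y ^ (-p) := by
  rcases le_total x y with hxy | hyx
  · rw [min_eq_left hxy, max_eq_right hxy]
    have hxq : x ^ (q - p) ≤ y ^ (q - p) := Real.rpow_le_rpow hx.le hxy (by linarith)
    calc x ^ (-p) * y ^ (-q) = x ^ (-q) * x ^ (q - p) * y ^ (-q) := by
          rw [← Real.rpow_add hx]; ring_nf
      _ ≤ x ^ (-q) * y ^ (q - p) * y ^ (-q) := by gcongr
      _ = x ^ (-q) * y ^ (-p) := by rw [mul_assoc, ← Real.rpow_add hy]; ring_nf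
  · rw [min_eq_right hyx, max_eq_left hyx, mul_comm]

lemma ENNReal.tsum_ofReal_le_ofReal_tsum {ι : Type*} {f g : ι → ℝ} (hg : Summable g)
    (hg0 : ∀ j, 0 ≤ g j) (hfg : ∀ j, f j ≤ g j) :
    ∑' j, ENNReal.ofReal (f j) ≤ ENNReal.ofReal (∑' j, g j) := by
  rw [ENNReal.ofReal_tsum_of_nonneg hg0 hg]
  exact ENNReal.tsum_le_tsum fun j => ENNReal.ofReal_le_ofReal (hfg j)

theorem stmt10_general (α b : ℝ) (hb : b ∈ Set.Ioo (1 / 2 : ℝ) α) :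
    ∃ C : ℝ, 0 < C ∧ ∀ i : ℕ, 1 ≤ i →
      (∑' j : ℕ+, ENNReal.ofReal
          ((min (i : ℝ) ((j : ℕ) : ℝ)) ^ (-(1 - b)) * (max (i : ℝ) ((j : ℕ) : ℝ)) ^ (-b) *
            ((j : ℕ) : ℝ) ^ (-α)))
        ≤ ENNReal.ofReal (C * (i : ℝ) ^ (-b)) := by
  obtain ⟨hb_half, hbα⟩ := hb
  have hsum : Summable fun n : ℕ+ => ((n : ℕ) : ℝ) ^ (-(1 - b + α)) :=
    summable_pnat_iff_summable_nat.mpr (Real.summable_nat_rpow.mpr (by linarith))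
  refine ⟨∑' n : ℕ+, ((n : ℕ) : ℝ) ^ (-(1 - b + α)),
    hsum.tsum_pos (fun n => by positivity) 1 (by norm_num), fun i hi => ?_⟩
  have hi0 : (0 : ℝ) < i := by exact_mod_cast hi
  rw [mul_comm, ← tsum_mul_left]
  refine ENNReal.tsum_ofReal_le_ofReal_tsum (hsum.mul_left _) (fun j => by positivity) fun j => ?_
  have hj0 : (0 : ℝ) < (j : ℕ) := by exact_mod_cast j.pos
  calc _ ≤ (i : ℝ) ^ (-b) * ((j : ℕ) : ℝ) ^ (-(1 - b)) * ((j : ℕ) : ℝ) ^ (-α) := 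
        mul_le_mul_of_nonneg_right
          (Real.min_rpow_neg_mul_max_rpow_neg_le hi0 hj0 (by linarith)) (by positivity)
    _ = _ := by rw [mul_assoc, ← Real.rpow_add hj0]; ring_nf

/-- For `α ∈ (1/2, 1)` and `b ∈ (1/2, α)` there is a constant
`C < ∞` such that for every positive integer `i`:
`∑_{j=1}^∞ (min i j)^{−(1−b)} (max i j)^{−b} j^{−α} ≤ C i^{−b}`. -/
theorem stmt10 (α b : ℝ) (hα : α ∈ Set.Ioo (1 / 2 : ℝ) 1) (hb : b ∈ Set.Ioo (1 / 2 : ℝ) α) :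
    ∃ C : ℝ, 0 < C ∧ ∀ i : ℕ, 1 ≤ i →
      (∑' j : ℕ+, ENNReal.ofReal
          ((min (i : ℝ) ((j : ℕ) : ℝ)) ^ (-(1 - b)) * (max (i : ℝ) ((j : ℕ) : ℝ)) ^ (-b) *
            ((j : ℕ) : ℝ) ^ (-α)))
        ≤ ENNReal.ofReal (C * (i : ℝ) ^ (-b)) :=
  stmt10_general α b hb
end

section
/- Let π_n = λ_n n^{−(3−τ)/2} with λ_n → 0, and fix K ≥ 1. Consider the random graph on [n] in which each pair {u,v}, u ≠ v, is an edge independently with probability π_n (1 − e^{−w_u w_v/ℓ_n}). Then the probability that some pair 1 ≤ i < j ≤ K is joined by a path of length two tends to 0 as n → ∞. -/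
open MeasureTheory Real Filter
open scoped ENNReal NNReal

noncomputable section

/-- The (clipped) edge-retention probability of the percolated Norros–Reittu model:
each pair `{u,v}` is an edge with probability `π (1 − e^{−w_u w_v/ℓ_n})`. -/
def edgeP (τ cF pr : ℝ) (n u v : ℕ) : ℝ≥0∞ :=
  min (ENNReal.ofReal (pr * (1 - Real.exp (-(wFn τ cF n u * wFn τ cF n v / ellFn τ cF n))))) 1

/-- The law of the percolated Norros–Reittu random graph on `[n]` (vertex `u : Fin n`
carries the label `u+1 ∈ [n]`), realized as an independent product of Bernoulli
coordinates indexed by ordered pairs; only the sorted coordinates are used. -/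
def graphMeasure (τ cF pr : ℝ) (n : ℕ) : MeasureTheory.Measure (Fin n × Fin n → Bool) :=
  MeasureTheory.Measure.pi fun e =>
    (PMF.bernoulli (edgeP τ cF pr n ((min e.1 e.2).val + 1) ((max e.1 e.2).val + 1)).toNNReal
      (le_of_le_of_eq (ENNReal.toNNReal_mono ENNReal.one_ne_top (min_le_right _ _))
        ENNReal.toNNReal_one)).toMeasure

/-- Adjacency in the percolated graph: `u ≠ v` and the edge `{u,v}` is retained. -/
def NRAdj (n : ℕ) (ω : Fin n × Fin n → Bool) (u v : Fin n) : Prop :=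
  u ≠ v ∧ ω (min u v, max u v) = true

/-- Existence of a self-avoiding path of length `k` joining `i` and `j`. -/
def hasPath (n : ℕ) (ω : Fin n × Fin n → Bool) (k : ℕ) (i j : Fin n) : Prop :=
  ∃ q : Fin (k + 1) → Fin n, Function.Injective q ∧ q 0 = i ∧ q (Fin.last k) = j ∧
    ∀ r : Fin k, NRAdj n ω (q r.castSucc) (q r.succ)

/-!
Union bound over the at most `K²` pairs `u < v` and the middle vertex `z`. The two edges of a
path `u – z – v` are distinct coordinates, hence independent, and since `w_u ≤ c_F n^α`,
`w_z = c_F n^α z^{-α}` and `ℓ_n ≥ c_F n`, each is present with probability at most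
`π_n min(1, a z^{-α})` with `a = c_F n^{2α-1}`. The terms `min(1, a z^{-α})²` are `1` up to
`z ≈ a^{1/α}` and then decay like `z^{-2α}` with `2α > 1`, so their sum is `O(a^{1/α} + 1)`.
As `a^{1/α} = c_F^{1/α} n^{3-τ}` exactly cancels `π_n² = λ_n² n^{-(3-τ)}`, the probability is
`O(K² λ_n²) → 0`.
-/

open Finset

lemma measure_pi_setOf_mem_and_mem {ι : Type*} [Fintype ι] {Ω : ι → Type*}
    [∀ i, MeasurableSpace (Ω i)] (μ : ∀ i, Measure (Ω i)) [∀ i, IsProbabilityMeasure (μ i)]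
    {a b : ι} (hab : a ≠ b) {s : Set (Ω a)} {t : Set (Ω b)}
    (hs : MeasurableSet s) (ht : MeasurableSet t) :
    Measure.pi μ {ω | ω a ∈ s ∧ ω b ∈ t} = μ a s * μ b t := by
  have hindep := (ProbabilityTheory.iIndepFun_pi (X := fun _ ↦ id) (μ := μ)
    fun _ ↦ aemeasurable_id).indepFun hab
  rw [← (measurePreserving_eval μ a).measure_preimage hs.nullMeasurableSet,
    ← (measurePreserving_eval μ b).measure_preimage ht.nullMeasurableSet]
  exact hindep.measure_inter_preimage_eq_mul _ _ hs ht

lemma sortedPair_ne {A : Type*} [LinearOrder A] {u v : A} (z : A) (huv : u ≠ v) :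
    ((min u z, max u z) : A × A) ≠ (min z v, max z v) := by
  intro h
  simp only [Prod.mk.injEq] at h
  rcases le_total u z with h1 | h1 <;> rcases le_total z v with h2 | h2 <;>
    simp_all

lemma mul_one_sub_exp_neg_le {p x : ℝ} (hx : 0 ≤ x) : p * (1 - exp (-x)) ≤ |p| * min 1 x := by
  have h0 : 0 ≤ 1 - exp (-x) := by linarith [exp_le_one_iff.2 (neg_nonpos.2 hx)]
  calc p * (1 - exp (-x)) ≤ |p| * (1 - exp (-x)) := mul_le_mul_of_nonneg_right (le_abs_self p) h0
    _ ≤ |p| * min 1 x := by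
      gcongr
      exact le_min (by linarith [exp_nonneg (-x)]) (by linarith [add_one_le_exp (-x)])

lemma sum_range_rpow_le {q x : ℝ} (hq : 0 < q) (hx : 0 < x) (N : ℕ) :
    ∑ i ∈ range N, (x + ↑(i + 1)) ^ (-q - 1) ≤ x ^ (-q) / q := by
  have hanti : AntitoneOn (fun y : ℝ ↦ y ^ (-q - 1)) (Set.Icc x (x + N)) :=
    fun y hy y' _ hyy' ↦ rpow_le_rpow_of_nonpos (hx.trans_le hy.1) hyy' (by linarith)
  refine (hanti.sum_le_integral).trans ?_
  have h0 : (0 : ℝ) ∉ Set.uIcc x (x + N) := by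
    rw [Set.uIcc_of_le (by simp)]; exact fun h ↦ (hx.trans_le h.1).ne' rfl
  rw [integral_rpow (Or.inr ⟨by linarith, h0⟩), sub_add_cancel, div_neg, ← neg_div, neg_sub]
  gcongr
  linarith [rpow_nonneg (hx.le.trans (le_add_of_nonneg_right (Nat.cast_nonneg N))) (-q)]

lemma edgeP_ne_top (τ cF pr : ℝ) (n u v : ℕ) : edgeP τ cF pr n u v ≠ ⊤ :=
  ne_top_of_le_ne_top ENNReal.one_ne_top (min_le_right _ _)

set_option linter.deprecated false in
lemma graphMeasure_edge_edge (τ cF pr : ℝ) (n : ℕ) {e e' : Fin n × Fin n} (h : e ≠ e') :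
    graphMeasure τ cF pr n {ω | ω e = true ∧ ω e' = true}
      = edgeP τ cF pr n ((min e.1 e.2).val + 1) ((max e.1 e.2).val + 1)
        * edgeP τ cF pr n ((min e'.1 e'.2).val + 1) ((max e'.1 e'.2).val + 1) := by
  have hset : {ω : Fin n × Fin n → Bool | ω e = true ∧ ω e' = true}
      = {ω | ω e ∈ ({true} : Set Bool) ∧ ω e' ∈ ({true} : Set Bool)} := rfl
  rw [graphMeasure, hset, measure_pi_setOf_mem_and_mem _ h
    (measurableSet_singleton _) (measurableSet_singleton _)]
  simp [PMF.toMeasure_apply_singleton _ _ (measurableSet_singleton true), PMF.bernoulli_apply,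
    edgeP_ne_top]

lemma min_one_mul_rpow_sq_le {α a M y : ℝ} (ha : 0 ≤ a) (hM : 0 ≤ M) (haM : a ≤ M ^ α)
    (hy : 0 < y) : min 1 (a * y ^ (-α)) ^ 2 ≤ M ^ (2 * α) * y ^ (-(2 * α - 1) - 1) := by
  calc min 1 (a * y ^ (-α)) ^ 2 ≤ (M ^ α * y ^ (-α)) ^ 2 := by
        gcongr
        exact (min_le_right _ _).trans (by gcongr)
    _ = M ^ (2 * α) * y ^ (-(2 * α - 1) - 1) := by
        rw [mul_pow, ← rpow_natCast, ← rpow_natCast, ← rpow_mul hM, ← rpow_mul hy.le]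
        ring_nf

lemma sum_range_min_one_mul_rpow_sq_le {α a : ℝ} (hα : 1 / 2 < α) (ha : 0 ≤ a) (N : ℕ) :
    ∑ i ∈ range N, min 1 (a * ((i : ℝ) + 1) ^ (-α)) ^ 2
      ≤ (a ^ (1 / α) + 2) * (1 + 1 / (2 * α - 1)) := by
  set f : ℕ → ℝ := fun i ↦ min 1 (a * ((i : ℝ) + 1) ^ (-α)) ^ 2
  set m := ⌈a ^ (1 / α)⌉₊
  have hq : 0 < 2 * α - 1 := by linarith
  have hM : (0 : ℝ) < m + 1 := by positivity
  have haM : a ≤ ((m : ℝ) + 1) ^ α := by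
    calc a = (a ^ (1 / α)) ^ α := by rw [← rpow_mul ha, one_div_mul_cancel (by linarith), rpow_one]
      _ ≤ ((m : ℝ) + 1) ^ α := by
        gcongr
        exact (Nat.le_ceil _).trans (by linarith)
  have hhead : ∑ i ∈ range (m + 1), f i ≤ m + 1 := by
    calc ∑ i ∈ range (m + 1), f i ≤ ∑ i ∈ range (m + 1), (1 : ℝ) := by
          gcongr with i
          exact pow_le_one₀ (le_min zero_le_one (by positivity)) (min_le_left _ _)
      _ = m + 1 := by simp
  have htail : ∑ i ∈ range N, f (m + 1 + i) ≤ (m + 1) / (2 * α - 1) := by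
    calc ∑ i ∈ range N, f (m + 1 + i)
        ≤ ∑ i ∈ range N,
            ((m : ℝ) + 1) ^ (2 * α) * (((m : ℝ) + 1) + ↑(i + 1)) ^ (-(2 * α - 1) - 1) := by
          gcongr with i
          have hcast : ((m + 1 + i : ℕ) : ℝ) + 1 = (m + 1) + ↑(i + 1) := by push_cast; ring
          simp only [f, hcast]
          exact min_one_mul_rpow_sq_le ha hM.le haM (by positivity)
      _ ≤ ((m : ℝ) + 1) ^ (2 * α) * (((m : ℝ) + 1) ^ (-(2 * α - 1)) / (2 * α - 1)) := by
          rw [← mul_sum]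
          gcongr
          exact sum_range_rpow_le hq hM N
      _ = (m + 1) / (2 * α - 1) := by
          rw [mul_div_assoc', ← rpow_add hM]
          norm_num
  have hsplit : ∑ i ∈ range N, f i ≤ ∑ i ∈ range (m + 1), f i + ∑ i ∈ range N, f (m + 1 + i) := by
    rw [← sum_range_add]
    exact sum_le_sum_of_subset_of_nonneg (range_mono (by omega)) fun i _ _ ↦ sq_nonneg _
  have hm : (m : ℝ) < a ^ (1 / α) + 1 := Nat.ceil_lt_add_one (by positivity)
  calc ∑ i ∈ range N, f i ≤ (m + 1) * (1 + 1 / (2 * α - 1)) := by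
        rw [mul_one_add, mul_one_div]; linarith
    _ ≤ (a ^ (1 / α) + 2) * (1 + 1 / (2 * α - 1)) := by gcongr ?_ * _; linarith

section Weights

variable {τ cF : ℝ}

lemma wFn_nonneg (hcF : 0 ≤ cF) (n i : ℕ) : 0 ≤ wFn τ cF n i := by
  unfold wFn; positivity

lemma wFn_eq (n i : ℕ) :
    wFn τ cF n i = cF * (n : ℝ) ^ alphaOf τ * (i : ℝ) ^ (-alphaOf τ) := by
  rw [wFn, div_rpow (Nat.cast_nonneg n) (Nat.cast_nonneg i), rpow_neg (Nat.cast_nonneg i),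
    div_eq_mul_inv, mul_assoc]

lemma wFn_le (hcF : 0 ≤ cF) (hα : 0 ≤ alphaOf τ) (n : ℕ) {i : ℕ} (hi : 1 ≤ i) :
    wFn τ cF n i ≤ cF * (n : ℝ) ^ alphaOf τ := by
  unfold wFn
  gcongr
  exact div_le_self (Nat.cast_nonneg n) (by exact_mod_cast hi)

lemma mul_le_ellFn (hcF : 0 ≤ cF) (hα : 0 ≤ alphaOf τ) (n : ℕ) : cF * n ≤ ellFn τ cF n := by
  have hterm : ∀ i ∈ Icc 1 n, cF ≤ wFn τ cF n i := fun i hi ↦ by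
    obtain ⟨hi1, hin⟩ := mem_Icc.1 hi
    have h1 : (1 : ℝ) ≤ n / i := (one_le_div (by positivity)).2 (by exact_mod_cast hin)
    simpa [wFn] using mul_le_mul_of_nonneg_left (one_le_rpow h1 hα) hcF
  simpa [ellFn, mul_comm] using card_nsmul_le_sum (Icc 1 n) (wFn τ cF n) cF hterm

lemma wFn_mul_wFn_div_ellFn_le (hcF : 0 < cF) (hα : 0 ≤ alphaOf τ) {n i : ℕ} (hn : 1 ≤ n)
    (hi : 1 ≤ i) (j : ℕ) :
    wFn τ cF n i * wFn τ cF n j / ellFn τ cF n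
      ≤ cF * (n : ℝ) ^ (2 * alphaOf τ - 1) * (j : ℝ) ^ (-alphaOf τ) := by
  have hn0 : (0 : ℝ) < n := by exact_mod_cast hn
  calc wFn τ cF n i * wFn τ cF n j / ellFn τ cF n
      ≤ (cF * (n : ℝ) ^ alphaOf τ) * (cF * (n : ℝ) ^ alphaOf τ * (j : ℝ) ^ (-alphaOf τ))
          / (cF * n) := by
        rw [← wFn_eq]
        exact div_le_div₀ (mul_nonneg (by positivity) (wFn_nonneg hcF.le n j))
          (mul_le_mul_of_nonneg_right (wFn_le hcF.le hα n hi) (wFn_nonneg hcF.le n j))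
          (mul_pos hcF hn0) (mul_le_ellFn hcF.le hα n)
    _ = cF * (n : ℝ) ^ (2 * alphaOf τ - 1) * (j : ℝ) ^ (-alphaOf τ) := by
        rw [rpow_sub hn0, rpow_one, two_mul, rpow_add hn0]
        field_simp

end Weights

section EdgeProbability

variable {τ cF : ℝ}

lemma edgeP_comm (pr : ℝ) (n u v : ℕ) : edgeP τ cF pr n u v = edgeP τ cF pr n v u := by
  rw [edgeP, edgeP, mul_comm (wFn τ cF n u)]

lemma edgeP_min_max (pr : ℝ) {n : ℕ} (u z : Fin n) :
    edgeP τ cF pr n ((min u z).val + 1) ((max u z).val + 1)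
      = edgeP τ cF pr n (u.val + 1) (z.val + 1) := by
  rcases le_total u z with h | h
  · rw [min_eq_left h, max_eq_right h]
  · rw [min_eq_right h, max_eq_left h, edgeP_comm]

lemma edgeP_le (hcF : 0 < cF) (hα : 0 ≤ alphaOf τ) (pr : ℝ) {n i : ℕ} (hn : 1 ≤ n)
    (hi : 1 ≤ i) (j : ℕ) :
    edgeP τ cF pr n i j
      ≤ ENNReal.ofReal
          (|pr| * min 1 (cF * (n : ℝ) ^ (2 * alphaOf τ - 1) * (j : ℝ) ^ (-alphaOf τ))) := by
  have hx : 0 ≤ wFn τ cF n i * wFn τ cF n j / ellFn τ cF n :=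
    div_nonneg (mul_nonneg (wFn_nonneg hcF.le n i) (wFn_nonneg hcF.le n j))
      ((by positivity : 0 ≤ cF * n).trans (mul_le_ellFn hcF.le hα n))
  refine (min_le_left _ _).trans (ENNReal.ofReal_le_ofReal ?_)
  refine (mul_one_sub_exp_neg_le hx).trans ?_
  gcongr
  exact wFn_mul_wFn_div_ellFn_le hcF hα hn hi j

end EdgeProbability

section PathsOfLengthTwo

variable {τ cF : ℝ}

lemma graphMeasure_adj_adj_le (pr : ℝ) {n : ℕ} {u v : Fin n} (z : Fin n) (huv : u ≠ v) :
    graphMeasure τ cF pr n {ω | NRAdj n ω u z ∧ NRAdj n ω z v}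
      ≤ edgeP τ cF pr n (u.val + 1) (z.val + 1) * edgeP τ cF pr n (v.val + 1) (z.val + 1) := by
  calc graphMeasure τ cF pr n {ω | NRAdj n ω u z ∧ NRAdj n ω z v}
      ≤ graphMeasure τ cF pr n {ω | ω (min u z, max u z) = true ∧ ω (min z v, max z v) = true} :=
        measure_mono fun ω h ↦ ⟨h.1.2, h.2.2⟩
    _ = _ := by
        rw [graphMeasure_edge_edge τ cF pr n (sortedPair_ne z huv)]
        simp only [min_le_max, min_eq_left, max_eq_right, edgeP_min_max]
        rw [edgeP_comm pr n (z.val + 1)]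

lemma graphMeasure_pathTwo_le_sum (hcF : 0 < cF) (hα : 0 ≤ alphaOf τ) (pr : ℝ) (K n : ℕ) :
    graphMeasure τ cF pr n
        {ω | ∃ u v z : Fin n, u < v ∧ (v : ℕ) + 1 ≤ K ∧ NRAdj n ω u z ∧ NRAdj n ω z v}
      ≤ (K : ℝ≥0∞) ^ 2 * ENNReal.ofReal (pr ^ 2 * ∑ i ∈ range n,
          min 1 (cF * (n : ℝ) ^ (2 * alphaOf τ - 1) * ((i : ℝ) + 1) ^ (-alphaOf τ)) ^ 2) := by
  classical
  set P := univ.filter fun p : Fin n × Fin n ↦ p.1 < p.2 ∧ (p.2 : ℕ) + 1 ≤ K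
  set a := cF * (n : ℝ) ^ (2 * alphaOf τ - 1)
  set b : Fin n → ℝ := fun z ↦ |pr| * min 1 (a * ((z : ℕ) + 1 : ℕ) ^ (-alphaOf τ))
  have hcover : {ω | ∃ u v z : Fin n, u < v ∧ (v : ℕ) + 1 ≤ K ∧ NRAdj n ω u z ∧ NRAdj n ω z v}
      ⊆ ⋃ p ∈ P, ⋃ z, {ω | NRAdj n ω p.1 z ∧ NRAdj n ω z p.2} := by
    rintro ω ⟨u, v, z, huv, hvK, hadj⟩
    simp only [Set.mem_iUnion]
    exact ⟨(u, v), by simp [P, huv]; omega, z, hadj⟩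
  have hterm : ∀ p ∈ P, ∀ z, graphMeasure τ cF pr n {ω | NRAdj n ω p.1 z ∧ NRAdj n ω z p.2}
      ≤ ENNReal.ofReal (b z ^ 2) := by
    intro p hp z
    have hn : 1 ≤ n := z.pos
    rw [sq, ENNReal.ofReal_mul (by positivity)]
    refine (graphMeasure_adj_adj_le pr z (mem_filter.1 hp).2.1.ne).trans ?_
    gcongr <;> exact edgeP_le hcF hα pr hn (by omega) _
  have hcard : #P ≤ K ^ 2 := by
    set A := univ.filter fun u : Fin n ↦ (u : ℕ) < K
    have hA : #A ≤ K := Fin.card_filter_val_lt.trans_le (min_le_right _ _)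
    calc #P ≤ #(A ×ˢ A) := card_le_card fun p hp ↦ by
          simp only [P, A, mem_filter, mem_product, mem_univ, true_and] at hp ⊢
          have := Fin.lt_def.1 hp.1
          omega
      _ ≤ K ^ 2 := by rw [card_product, sq]; exact Nat.mul_le_mul hA hA
  calc graphMeasure τ cF pr n
        {ω | ∃ u v z : Fin n, u < v ∧ (v : ℕ) + 1 ≤ K ∧ NRAdj n ω u z ∧ NRAdj n ω z v}
      ≤ ∑ p ∈ P, ∑ z, graphMeasure τ cF pr n {ω | NRAdj n ω p.1 z ∧ NRAdj n ω z p.2} :=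
        (measure_mono hcover).trans ((measure_biUnion_finset_le _ _).trans
          (sum_le_sum fun p _ ↦ measure_iUnion_fintype_le _ _))
    _ ≤ ∑ p ∈ P, ∑ z, ENNReal.ofReal (b z ^ 2) := by
        gcongr with p hp z
        exact hterm p hp z
    _ = #P * ENNReal.ofReal (∑ z, b z ^ 2) := by
        rw [sum_const, nsmul_eq_mul, ENNReal.ofReal_sum_of_nonneg fun z _ ↦ sq_nonneg _]
    _ ≤ _ := by
        gcongr
        · exact_mod_cast hcard
        · simp only [b, mul_pow, sq_abs, ← mul_sum, Nat.cast_add, Nat.cast_one]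
          rw [Fin.sum_univ_eq_sum_range (fun i ↦ min 1 (a * ((i : ℝ) + 1) ^ (-alphaOf τ)) ^ 2)]

end PathsOfLengthTwo

section Asymptotics

variable {τ cF : ℝ}

lemma half_lt_alphaOf (hτ1 : 1 < τ) (hτ3 : τ < 3) : 1 / 2 < alphaOf τ := by
  rw [alphaOf, div_lt_div_iff₀ (by norm_num) (by linarith)]
  linarith

lemma piC_sq_mul_le (hτ1 : 1 < τ) (hτ3 : τ ≤ 3) (hcF : 0 ≤ cF) {n : ℕ} (hn : 1 ≤ n)
    (lam : ℝ) :
    piC τ lam n ^ 2 * ((cF * (n : ℝ) ^ (2 * alphaOf τ - 1)) ^ (1 / alphaOf τ) + 2)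
      ≤ lam ^ 2 * (cF ^ (1 / alphaOf τ) + 2) := by
  have hn0 : (0 : ℝ) < n := by exact_mod_cast hn
  have hexp : (2 * alphaOf τ - 1) * (1 / alphaOf τ) = 3 - τ := by
    rw [alphaOf]
    field_simp [(by linarith : τ - 1 ≠ 0)]
    ring
  have hpiC : piC τ lam n ^ 2 = lam ^ 2 * (n : ℝ) ^ (-(3 - τ)) := by
    rw [piC, mul_pow, ← rpow_mul_natCast hn0.le]
    ring_nf
  have hpow : (cF * (n : ℝ) ^ (2 * alphaOf τ - 1)) ^ (1 / alphaOf τ)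
      = cF ^ (1 / alphaOf τ) * (n : ℝ) ^ (3 - τ) := by
    rw [mul_rpow hcF (by positivity), ← rpow_mul hn0.le, hexp]
  have hcancel : (n : ℝ) ^ (-(3 - τ)) * (n : ℝ) ^ (3 - τ) = 1 := by
    rw [← rpow_add hn0]; simp
  have hle : (n : ℝ) ^ (-(3 - τ)) ≤ 1 :=
    rpow_le_one_of_one_le_of_nonpos (by exact_mod_cast hn) (by linarith)
  rw [hpiC, hpow]
  calc lam ^ 2 * (n : ℝ) ^ (-(3 - τ)) * (cF ^ (1 / alphaOf τ) * (n : ℝ) ^ (3 - τ) + 2)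
      = lam ^ 2 * (cF ^ (1 / alphaOf τ) + 2 * (n : ℝ) ^ (-(3 - τ))) := by
        linear_combination lam ^ 2 * cF ^ (1 / alphaOf τ) * hcancel
    _ ≤ lam ^ 2 * (cF ^ (1 / alphaOf τ) + 2) := by gcongr; linarith

lemma graphMeasure_pathTwo_le (hτ1 : 1 < τ) (hτ3 : τ < 3) (hcF : 0 < cF) (K : ℕ) {n : ℕ}
    (hn : 1 ≤ n) (lam : ℝ) :
    graphMeasure τ cF (piC τ lam n) n
        {ω | ∃ u v z : Fin n, u < v ∧ (v : ℕ) + 1 ≤ K ∧ NRAdj n ω u z ∧ NRAdj n ω z v}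
      ≤ (K : ℝ≥0∞) ^ 2 * ENNReal.ofReal
          (lam ^ 2 * ((cF ^ (1 / alphaOf τ) + 2) * (1 + 1 / (2 * alphaOf τ - 1)))) := by
  have hα := half_lt_alphaOf hτ1 hτ3
  refine (graphMeasure_pathTwo_le_sum hcF (by linarith) _ K n).trans
    (mul_le_mul_right (ENNReal.ofReal_le_ofReal ?_) _)
  have hq : 0 ≤ 1 + 1 / (2 * alphaOf τ - 1) := by
    have : 0 < 2 * alphaOf τ - 1 := by linarith
    positivity
  calc piC τ lam n ^ 2 * ∑ i ∈ range n,
        min 1 (cF * (n : ℝ) ^ (2 * alphaOf τ - 1) * ((i : ℝ) + 1) ^ (-alphaOf τ)) ^ 2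
      ≤ piC τ lam n ^ 2 * (((cF * (n : ℝ) ^ (2 * alphaOf τ - 1)) ^ (1 / alphaOf τ) + 2)
          * (1 + 1 / (2 * alphaOf τ - 1))) := by
        gcongr
        exact sum_range_min_one_mul_rpow_sq_le hα (by positivity) n
    _ ≤ lam ^ 2 * (cF ^ (1 / alphaOf τ) + 2) * (1 + 1 / (2 * alphaOf τ - 1)) := by
        rw [← mul_assoc]
        exact mul_le_mul_of_nonneg_right (piC_sq_mul_le hτ1 hτ3.le hcF.le hn lam) hq
    _ = _ := mul_assoc _ _ _

end Asymptotics

theorem stmt14_general (τ cF : ℝ) (hτ : τ ∈ Set.Ioo (2 : ℝ) 3) (hcF : 0 < cF)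
    (K : ℕ)
    (lamn : ℕ → ℝ) (hto0 : Tendsto lamn atTop (nhds 0)) :
    Tendsto
      (fun n : ℕ =>
        graphMeasure τ cF (lamn n * (n : ℝ) ^ (-((3 - τ) / 2))) n
          {ω | ∃ u v z : Fin n, u < v ∧ (v : ℕ) + 1 ≤ K ∧ NRAdj n ω u z ∧ NRAdj n ω z v})
      atTop (nhds 0) := by
  set C := (cF ^ (1 / alphaOf τ) + 2) * (1 + 1 / (2 * alphaOf τ - 1))
  have hlim :
      Tendsto (fun n ↦ (K : ℝ≥0∞) ^ 2 * ENNReal.ofReal (lamn n ^ 2 * C)) atTop (nhds 0) := by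
    have h := ENNReal.tendsto_ofReal ((hto0.pow 2).mul_const C)
    simpa using ENNReal.Tendsto.const_mul h (Or.inr (by simp))
  refine tendsto_of_tendsto_of_tendsto_of_le_of_le' tendsto_const_nhds hlim
    (Eventually.of_forall fun _ ↦ zero_le) (eventually_atTop.2 ⟨1, fun n hn ↦ ?_⟩)
  exact graphMeasure_pathTwo_le (by linarith [hτ.1]) hτ.2 hcF K hn (lamn n)

/-- Let `π_n = λ_n n^{−(3−τ)/2}` with `λ_n → 0`, and fix `K ≥ 1`. In the
random graph on `[n]` where each pair `{u,v}` is independently an edge with probability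
`π_n (1 − e^{−w_u w_v/ℓ_n})`, the probability that some pair `1 ≤ i < j ≤ K` is joined by
a path of length two tends to `0` as `n → ∞`. (Vertex `u : Fin n` carries label `u+1`.) -/
theorem stmt14 (τ cF : ℝ) (hτ : τ ∈ Set.Ioo (2 : ℝ) 3) (hcF : 0 < cF)
    (K : ℕ) (hK : 1 ≤ K)
    (lamn : ℕ → ℝ) (hnonneg : ∀ n, 0 ≤ lamn n) (hto0 : Tendsto lamn atTop (nhds 0)) :
    Tendsto
      (fun n : ℕ =>
        graphMeasure τ cF (lamn n * (n : ℝ) ^ (-((3 - τ) / 2))) n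
          {ω | ∃ u v z : Fin n, u < v ∧ (v : ℕ) + 1 ≤ K ∧ NRAdj n ω u z ∧ NRAdj n ω z v})
      atTop (nhds 0) :=
  stmt14_general τ cF hτ hcF K lamn hto0
end
end
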